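/- arXiv:2304.04024 — 9 statements merged into one kernel-verified Lean document; each statement's English description precedes it below -/
import Mathlib

section
/- Let a, b, p be real with 0 < a < b and p > 0. For Instance H of size n, there exist a constant C and an integer N such that for all n ≥ N, |E[max_{1≤i≤n+1} V_i] − (1 + b·(1 − e^{−p}) + a·e^{−p})| ≤ C/n. -/
/-!
Almost surely `V₁, …, Vₙ` take values in `{0, b, n}` and `Vₙ₊₁ = a`, so the maximum equals
`n - (n - b)·1[no Vᵢ = n] - (b - a)·1[all Vᵢ = 0]`, and independence turns its expectation into
`n - (n - b)(1 - 1/n²)ⁿ - (b - a)(1 - p/n - 1/n²)ⁿ`. Bernoulli's inequality and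
`e^{-1/n} ≤ 1 - 1/n + 1/n²` put `(1 - 1/n²)ⁿ` within `O(1/n²)` of `1 - 1/n`, while
`(1 - t/n - δ)ⁿ` is within `t²/n + nδ` of `e^{-t}` because `|xⁿ - yⁿ| ≤ n|x - y|` on `[-1, 1]`.
-/

open MeasureTheory ProbabilityTheory Real

theorem abs_pow_sub_pow_le_of_abs_le_one {α : Type*} [CommRing α] [LinearOrder α]
    [IsOrderedRing α] {x y : α} (hx : |x| ≤ 1) (hy : |y| ≤ 1) (n : ℕ) :
    |x ^ n - y ^ n| ≤ n * |x - y| :=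
  calc |x ^ n - y ^ n| ≤ |x - y| * n * max |x| |y| ^ (n - 1) := abs_pow_sub_pow_le x y n
    _ ≤ |x - y| * n * 1 := by gcongr; exact pow_le_one₀ (by positivity) (max_le hx hy)
    _ = n * |x - y| := by ring

theorem abs_exp_neg_sub_pow_le {n : ℕ} (hn : 0 < n) {t δ : ℝ} (ht : 0 ≤ t) (htn : t ≤ n)
    (hδ : 0 ≤ δ) (htδ : t / n + δ ≤ 2) :
    |exp (-t) - (1 - t / n - δ) ^ n| ≤ t ^ 2 / n + n * δ := by
  have hn' : (0 : ℝ) < n := by exact_mod_cast hn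
  have hexp : exp (-t) = exp (-(t / n)) ^ n := by
    rw [← exp_nat_mul]; field_simp
  have hu : |exp (-(t / n))| ≤ 1 := by
    rw [abs_of_pos (exp_pos _)]; exact exp_le_one_iff.2 (by simp; positivity)
  have hy : |1 - t / n - δ| ≤ 1 := abs_le.2 ⟨by linarith, by linarith [div_nonneg ht hn'.le]⟩
  have htaylor := abs_exp_sub_one_sub_id_le (x := -(t / n))
    (by rw [abs_neg, abs_of_nonneg (by positivity)]; exact (div_le_one hn').2 htn)
  calc |exp (-t) - (1 - t / n - δ) ^ n|
      ≤ n * |exp (-(t / n)) - (1 - t / n - δ)| := by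
        rw [hexp]; exact abs_pow_sub_pow_le_of_abs_le_one hu hy n
    _ ≤ n * ((t / n) ^ 2 + δ) := by
        gcongr
        calc _ = |(exp (-(t / n)) - 1 - -(t / n)) + δ| := by ring_nf
          _ ≤ |exp (-(t / n)) - 1 - -(t / n)| + |δ| := abs_add_le _ _
          _ ≤ (t / n) ^ 2 + δ := by rw [abs_of_nonneg hδ, ← neg_sq]; linarith
    _ = t ^ 2 / n + n * δ := by field_simp

theorem pow_one_sub_one_div_sq_mem_Icc {n : ℕ} (hn : 0 < n) :
    (1 - 1 / (n : ℝ) ^ 2) ^ n ∈ Set.Icc (1 - 1 / (n : ℝ)) (1 - 1 / n + 1 / n ^ 2) := by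
  have hn1 : (1 : ℝ) ≤ n := by exact_mod_cast hn
  have hinv : 1 / (n : ℝ) ≤ 1 := (div_le_one (by positivity)).2 hn1
  have hinv_sq : 1 / (n : ℝ) ^ 2 ≤ 1 := (div_le_one (by positivity)).2 (one_le_pow₀ hn1)
  constructor
  · have := one_add_mul_le_pow (a := -(1 / (n : ℝ) ^ 2)) (by linarith) n
    convert this using 2
    · field_simp; ring
    · ring
  · have hpow := one_sub_div_pow_le_exp_neg (hinv.trans hn1) (n := n)
    have htaylor := abs_exp_sub_one_sub_id_le (x := -(1 / n))
      (by rw [abs_neg, abs_of_nonneg (by positivity)]; exact hinv)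
    rw [show 1 - 1 / (n : ℝ) ^ 2 = 1 - 1 / n / n by field_simp]
    linarith [(abs_le.1 htaylor).2, show (-(1 / (n : ℝ))) ^ 2 = 1 / n ^ 2 by field_simp]

theorem abs_mean_sub_limit_le {a b p : ℝ} (hb : 0 ≤ b) (hab : a ≤ b) (hp : 0 ≤ p) {n : ℕ}
    (hn : 0 < n) (hpn : p ≤ n) :
    |((n : ℝ) - (n - b) * (1 - 1 / (n : ℝ) ^ 2) ^ n - (b - a) * (1 - p / n - 1 / (n : ℝ) ^ 2) ^ n)
        - (1 + b * (1 - exp (-p)) + a * exp (-p))|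
      ≤ (1 + b + (b - a) * (p ^ 2 + 1)) / n := by
  have hn' : (0 : ℝ) < n := by exact_mod_cast hn
  have hn1 : (1 : ℝ) ≤ n := by exact_mod_cast hn
  have hinv_sq : 1 / (n : ℝ) ^ 2 ≤ 1 / n := one_div_le_one_div_of_le hn' (by nlinarith)
  set y := (1 - p / n - 1 / (n : ℝ) ^ 2) ^ n
  have hy : |exp (-p) - y| ≤ (p ^ 2 + 1) / n := by
    have := abs_exp_neg_sub_pow_le hn hp hpn (by positivity) (δ := 1 / (n : ℝ) ^ 2)
      (by linarith [(div_le_one hn').2 hpn, (div_le_one hn').2 hn1])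
    convert this using 1
    field_simp
  obtain ⟨hlo, hhi⟩ := pow_one_sub_one_div_sq_mem_Icc hn
  set x := (1 - 1 / (n : ℝ) ^ 2) ^ n
  have hx : |1 - x| ≤ 1 / n := abs_le.2 ⟨by linarith, by linarith⟩
  have hnx : |n * (1 - x) - 1| ≤ 1 / n :=
    calc |n * (1 - x) - 1| = n * |(1 - x) - 1 / n| := by
          rw [← abs_of_pos hn', ← abs_mul, abs_of_pos hn']; field_simp
      _ ≤ n * (1 / n ^ 2) := by gcongr; exact abs_le.2 ⟨by linarith, by linarith⟩
      _ = 1 / n := by field_simp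
  calc _ = |(n * (1 - x) - 1) - b * (1 - x) + (b - a) * (exp (-p) - y)| := by ring_nf
    _ ≤ |n * (1 - x) - 1| + |b * (1 - x)| + |(b - a) * (exp (-p) - y)| :=
        (abs_add_le _ _).trans (add_le_add_left (abs_sub _ _) _)
    _ = |n * (1 - x) - 1| + b * |1 - x| + (b - a) * |exp (-p) - y| := by
        rw [abs_mul, abs_mul, abs_of_nonneg hb, abs_of_nonneg (sub_nonneg.2 hab)]
    _ ≤ 1 / n + b * (1 / n) + (b - a) * ((p ^ 2 + 1) / n) := by gcongr
    _ = _ := by ring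

theorem iSup_eq_of_three_valued {n : ℕ} {a b c : ℝ} (ha : 0 ≤ a) (hab : a ≤ b) (hbc : b < c)
    {f : Fin (n + 1) → ℝ} (hlast : f (Fin.last n) = a)
    (hf : ∀ i : Fin n, f i.castSucc = 0 ∨ f i.castSucc = b ∨ f i.castSucc = c) :
    ⨆ i, f i = c - (c - b) * (if ∀ i : Fin n, f i.castSucc ≠ c then 1 else 0)
      - (b - a) * (if ∀ i : Fin n, f i.castSucc = 0 then 1 else 0) := by
  have hsup : ∀ m, (∃ i : Fin (n + 1), f i = m) → (∀ i : Fin n, f i.castSucc ≤ m) → a ≤ m →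
      ⨆ i, f i = m := fun m hm hle hlast_le =>
    (IsGreatest.isLUB (s := Set.range f) ⟨hm, Set.forall_mem_range.2 <|
      Fin.forall_fin_succ'.2 ⟨hle, hlast ▸ hlast_le⟩⟩).ciSup_eq
  split_ifs with hnc h0 h0
  · exact hsup _ ⟨Fin.last n, by rw [hlast]; ring⟩ (fun i => by rw [h0 i]; linarith)
      (by linarith)
  · obtain ⟨j, hj⟩ := not_forall.1 h0
    refine hsup _ ⟨j.castSucc, ?_⟩ (fun i => ?_) (by linarith)
    · rcases hf j with h | h | h
      · exact absurd h hj
      · rw [h]; ring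
      · exact absurd h (hnc j)
    · rcases hf i with h | h | h
      · linarith
      · linarith
      · exact absurd h (hnc i)
  · obtain ⟨j, hj⟩ := not_forall_not.1 hnc
    linarith [h0 j]
  · obtain ⟨j, hj⟩ := not_forall_not.1 hnc
    refine hsup _ ⟨j.castSucc, by rw [hj]; ring⟩ (fun i => ?_) (by linarith)
    rcases hf i with h | h | h <;> linarith

section

variable {Ω : Type*} [MeasurableSpace Ω] {P : Measure Ω}

theorem ae_mem_of_sum_measureReal_preimage_singleton_eq_one [IsProbabilityMeasure P]
    {β : Type*} [MeasurableSpace β] [MeasurableSingletonClass β] {X : Ω → β} (hX : Measurable X)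
    (s : Finset β) (h : ∑ x ∈ s, P.real (X ⁻¹' {x}) = 1) : ∀ᵐ ω ∂P, X ω ∈ s := by
  rw [sum_measureReal_preimage_singleton s fun y _ => hX (measurableSet_singleton y),
    measureReal_def, ENNReal.toReal_eq_one_iff] at h
  exact (mem_ae_iff_prob_eq_one (hX s.measurableSet)).2 h

theorem measureReal_iInter_preimage_eq_pow {ι β : Type*} [Fintype ι] [MeasurableSpace β]
    {W : ι → Ω → β} (hW : iIndepFun W P) {S : Set β} (hS : MeasurableSet S) {q : ℝ}
    (hq : ∀ i, P.real (W i ⁻¹' S) = q) :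
    P.real (⋂ i, W i ⁻¹' S) = q ^ Fintype.card ι := by
  rw [measureReal_def, hW.meas_iInter fun i => ⟨S, hS, rfl⟩, ENNReal.toReal_prod]
  simp [← measureReal_def, hq]

theorem integral_iSup_eq_of_three_valued [IsProbabilityMeasure P] {n : ℕ} {a b c q₀ q : ℝ}
    (ha : 0 ≤ a) (hab : a ≤ b) (hbc : b < c) {V : Fin (n + 1) → Ω → ℝ}
    (hV : ∀ i, Measurable (V i)) (hind : iIndepFun V P)
    (hvals : ∀ i : Fin n, ∀ᵐ ω ∂P,
      V i.castSucc ω = 0 ∨ V i.castSucc ω = b ∨ V i.castSucc ω = c)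
    (hlast : ∀ᵐ ω ∂P, V (Fin.last n) ω = a)
    (hq₀ : ∀ i : Fin n, P.real (V i.castSucc ⁻¹' {0}) = q₀)
    (hq : ∀ i : Fin n, P.real (V i.castSucc ⁻¹' {c}ᶜ) = q) :
    ∫ ω, ⨆ i, V i ω ∂P = c - (c - b) * q ^ n - (b - a) * q₀ ^ n := by
  have hW : iIndepFun (fun i : Fin n => V i.castSucc) P :=
    hind.precomp (Fin.castSucc_injective n)
  set S := ⋂ i : Fin n, V i.castSucc ⁻¹' {c}ᶜ
  set T := ⋂ i : Fin n, V i.castSucc ⁻¹' {0}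
  have hS : MeasurableSet S := .iInter fun i => hV _ (measurableSet_singleton c).compl
  have hT : MeasurableSet T := .iInter fun i => hV _ (measurableSet_singleton 0)
  have hae : (fun ω => ⨆ i, V i ω) =ᵐ[P]
      fun ω => c - (c - b) * S.indicator (1 : Ω → ℝ) ω - (b - a) * T.indicator 1 ω := by
    filter_upwards [ae_all_iff.2 hvals, hlast] with ω hω hωl
    classical
    rw [iSup_eq_of_three_valued ha hab hbc hωl hω, Set.indicator_apply, Set.indicator_apply]
    simp only [S, T, Set.mem_iInter, Set.mem_preimage, Set.mem_compl_iff,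
      Set.mem_singleton_iff, Pi.one_apply]
  have hSi : Integrable (S.indicator (1 : Ω → ℝ)) P := (integrable_const 1).indicator hS
  have hTi : Integrable (T.indicator (1 : Ω → ℝ)) P := (integrable_const 1).indicator hT
  have hcSi : Integrable (fun ω => c - (c - b) * S.indicator (1 : Ω → ℝ) ω) P :=
    (integrable_const c).sub (hSi.const_mul _)
  rw [integral_congr_ae hae, integral_sub hcSi (hTi.const_mul _),
    integral_sub (integrable_const c) (hSi.const_mul _), integral_const,
    integral_const_mul, integral_const_mul, integral_indicator_one hS, integral_indicator_one hT,
    measureReal_iInter_preimage_eq_pow hW (measurableSet_singleton c).compl hq,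
    measureReal_iInter_preimage_eq_pow hW (measurableSet_singleton 0) hq₀]
  simp

end

/-- for Instance H of size `n` (with parameters `0 < a < b`, `p > 0`), the
prophet's expectation satisfies
`E[max_{1≤i≤n+1} V_i] = 1 + b·(1 − e^{−p}) + a·e^{−p} + O(1/n)`. -/
theorem stmt_2 (a b p : ℝ) (ha : 0 < a) (hab : a < b) (hp : 0 < p) :
    ∃ C : ℝ, ∃ N : ℕ, ∀ n : ℕ, N ≤ n →
      ∀ (Ω : Type) (_ : MeasurableSpace Ω) (P : Measure Ω) (_ : IsProbabilityMeasure P)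
        (V : Fin (n + 1) → Ω → ℝ),
        (∀ i, Measurable (V i)) →
        iIndepFun V P →
        (∀ i : Fin (n + 1), (i : ℕ) < n →
          (P {ω | V i ω = (n : ℝ)}).toReal = 1 / (n : ℝ) ^ 2 ∧
          (P {ω | V i ω = b}).toReal = p / n ∧
          (P {ω | V i ω = 0}).toReal = 1 - p / n - 1 / (n : ℝ) ^ 2) →
        (∀ᵐ ω ∂P, V (Fin.last n) ω = a) →
        |(∫ ω, (⨆ i, V i ω) ∂P) - (1 + b * (1 - Real.exp (-p)) + a * Real.exp (-p))|
          ≤ C / n := by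
  refine ⟨1 + b + (b - a) * (p ^ 2 + 1), ⌈b⌉₊ + ⌈p⌉₊ + 1,
    fun n hn Ω _ P _ V hV hind hdist hlast => ?_⟩
  have hn0 : 0 < n := by omega
  have hbn : b < n := (Nat.le_ceil b).trans_lt (by exact_mod_cast (by omega : ⌈b⌉₊ < n))
  have hpn : p ≤ n := (Nat.le_ceil p).trans (by exact_mod_cast (by omega : ⌈p⌉₊ ≤ n))
  have hvals : ∀ i : Fin n, ∀ᵐ ω ∂P,
      V i.castSucc ω = 0 ∨ V i.castSucc ω = b ∨ V i.castSucc ω = n := fun i => by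
    obtain ⟨hPn, hPb, hP0⟩ := hdist i.castSucc i.isLt
    have hsum : ∑ x ∈ {0, b, (n : ℝ)}, P.real (V i.castSucc ⁻¹' {x}) = 1 := by
      rw [Finset.sum_insert (by simp [(ha.trans hab).ne, (Nat.cast_pos.2 hn0).ne]),
        Finset.sum_pair hbn.ne]
      show (P {ω | V i.castSucc ω = 0}).toReal + ((P {ω | V i.castSucc ω = b}).toReal
        + (P {ω | V i.castSucc ω = n}).toReal) = 1
      rw [hPn, hPb, hP0]
      ring
    filter_upwards [ae_mem_of_sum_measureReal_preimage_singleton_eq_one (hV _) _ hsum]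
      with ω hω
    simpa using hω
  have hq : ∀ i : Fin n, P.real (V i.castSucc ⁻¹' {(n : ℝ)}ᶜ) = 1 - 1 / (n : ℝ) ^ 2 :=
    fun i => by
      rw [Set.preimage_compl, probReal_compl_eq_one_sub (hV _ (measurableSet_singleton _))]
      exact congrArg (1 - ·) (hdist i.castSucc i.isLt).1
  rw [integral_iSup_eq_of_three_valued ha.le hab.le hbn hV hind hvals hlast
    (fun i => (hdist i.castSucc i.isLt).2.2) hq]
  exact abs_mean_sub_limit_le (ha.trans hab).le hab.le hp.le hn0 hpn
end

section
/- The acceptance time j_n satisfies lim_{n→∞} j_n/n = 1 + (1/p)·log((1+(b−a)·p)/(1+b·p)), and this limit lies in (0,1); in particular j_n ~ n·(1 + (1/p)·log((1+(b−a)·p)/(1+b·p))) as n → ∞. -/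
/-- Auxiliary sequence for the thresholds `φ^{(n)}_k`, counted backwards from time `n`:
`phiAux b p n m = φ^{(n)}_{n-m}`. -/
noncomputable def phiAux (b p : ℝ) (n : ℕ) : ℕ → ℝ
  | 0 => (1 + b * p) / n
  | m + 1 =>
      (1 / (n : ℝ) ^ 2) * max (n : ℝ) (phiAux b p n m)
        + (p / n) * max b (phiAux b p n m)
        + (1 - p / n - 1 / (n : ℝ) ^ 2) * max 0 (phiAux b p n m)

/-- The threshold `φ^{(n)}_k`: the expected future reward of the optimal rule at time `k`
given that the value `a` has already been probed.  Defined by `φ^{(n)}_n = (1+b·p)/n` and,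
for `1 ≤ k < n`,
`φ^{(n)}_k = (1/n²)·max(n, φ^{(n)}_{k+1}) + (p/n)·max(b, φ^{(n)}_{k+1})
  + (1 − p/n − 1/n²)·max(0, φ^{(n)}_{k+1})`. -/
noncomputable def phi (b p : ℝ) (n k : ℕ) : ℝ := phiAux b p n (n - k)

/-- Auxiliary sequence for the thresholds `φ̄^{(n)}_k`, counted backwards from time `n`:
`phibarAux a b p n m = φ̄^{(n)}_{n-m}`. -/
noncomputable def phibarAux (a b p : ℝ) (n : ℕ) : ℕ → ℝ
  | 0 => a
  | m + 1 =>
      max a (phiAux b p n m) / ((m : ℝ) + 2)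
        + (1 - 1 / ((m : ℝ) + 2)) *
            ((1 / (n : ℝ) ^ 2) * max (n : ℝ) (phibarAux a b p n m)
              + (p / n) * max b (phibarAux a b p n m)
              + (1 - p / n - 1 / (n : ℝ) ^ 2) * max 0 (phibarAux a b p n m))

/-- The threshold `φ̄^{(n)}_k`: the expected future reward of the optimal rule at time `k`
given that the value `a` has not been probed yet.  Defined by `φ̄^{(n)}_n = a` and, for
`1 ≤ k < n`,
`φ̄^{(n)}_k = max(a, φ^{(n)}_{k+1})/(n+1−k) + (1 − 1/(n+1−k))·[(1/n²)·max(n, φ̄^{(n)}_{k+1})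
  + (p/n)·max(b, φ̄^{(n)}_{k+1}) + (1 − p/n − 1/n²)·max(0, φ̄^{(n)}_{k+1})]`. -/
noncomputable def phibar (a b p : ℝ) (n k : ℕ) : ℝ := phibarAux a b p n (n - k)

/-- `j_n`: the earliest time `k ∈ {1,…,n}` with `a ≥ φ^{(n)}_k`. -/
noncomputable def jn (a b p : ℝ) (n : ℕ) : ℕ :=
  sInf {k : ℕ | 1 ≤ k ∧ k ≤ n ∧ phi b p n k ≤ a}

/-- `k_n`: the earliest time `k ∈ {1,…,n}` with `b ≥ φ^{(n)}_k`. -/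
noncomputable def kn (b p : ℝ) (n : ℕ) : ℕ :=
  sInf {k : ℕ | 1 ≤ k ∧ k ≤ n ∧ phi b p n k ≤ b}

/-- `k̄_n`: the earliest time `k ∈ {1,…,n}` with `b ≥ φ̄^{(n)}_k`. -/
noncomputable def kbarn (a b p : ℝ) (n : ℕ) : ℕ :=
  sInf {k : ℕ | 1 ≤ k ∧ k ≤ n ∧ phibar a b p n k ≤ b}

/-! While `φ ≤ b`, the recursion for `φ^{(n)}` is the affine map `φ ↦ (1+bp)/n + q_n φ` with
`q_n = 1 - p/n - 1/n²`, so `φ^{(n)}_{n-m} = C_n (1 - q_n^{m+1})` with fixed point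
`C_n = (1+bp)/(p+1/n)`; in general the closed form is a lower bound. Hence `φ^{(n)}_{n-m} ≤ a`
exactly when `m + 1 ≤ R_n = log(1 - a/C_n) / log q_n`, so `j_n = ⌈n + 1 - R_n⌉`. Since
`C_n → (1+bp)/p` and `n log q_n → -p`, `R_n / n → -log r / p` with `r = (1+(b-a)p)/(1+bp)`,
and `j_n / n → 1 + log r / p`; the hypothesis `log(1+pb) < p` places this limit in `(0,1)`. -/

open Filter Topology

noncomputable def phiRatio (p : ℝ) (n : ℕ) : ℝ := 1 - p / n - 1 / (n : ℝ) ^ 2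

noncomputable def phiLimit (b p : ℝ) (n : ℕ) : ℝ := (1 + b * p) / (p + 1 / n)

noncomputable def phiClosed (b p : ℝ) (n m : ℕ) : ℝ :=
  phiLimit b p n * (1 - phiRatio p n ^ (m + 1))

noncomputable def crossingTime (a b p : ℝ) (n : ℕ) : ℝ :=
  Real.log (1 - a / phiLimit b p n) / Real.log (phiRatio p n)

section ClosedForm

variable {a b p : ℝ} {n : ℕ}

lemma phiAux_succ_eq (m : ℕ) :
    phiAux b p n (m + 1) = 1 / (n : ℝ) ^ 2 * max (n : ℝ) (phiAux b p n m)
      + p / n * max b (phiAux b p n m) + phiRatio p n * max 0 (phiAux b p n m) := rfl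

lemma phiRatio_lt_one (hp : 0 < p) (hn : 0 < n) : phiRatio p n < 1 := by
  have : 0 < p / n + 1 / (n : ℝ) ^ 2 := by positivity
  unfold phiRatio; linarith

lemma phiLimit_mul_one_sub_phiRatio (hp : 0 < p) (hn : 0 < n) :
    phiLimit b p n * (1 - phiRatio p n) = (1 + b * p) / n := by
  have hn' : (0 : ℝ) < n := Nat.cast_pos.mpr hn
  have : p + 1 / (n : ℝ) ≠ 0 := by positivity
  unfold phiLimit phiRatio
  field_simp
  ring

lemma phiClosed_zero (hp : 0 < p) (hn : 0 < n) : phiClosed b p n 0 = phiAux b p n 0 := by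
  rw [phiClosed, zero_add, pow_one, phiLimit_mul_one_sub_phiRatio hp hn, phiAux]

lemma phiClosed_succ (hp : 0 < p) (hn : 0 < n) (m : ℕ) :
    phiClosed b p n (m + 1)
      = 1 / (n : ℝ) ^ 2 * n + p / n * b + phiRatio p n * phiClosed b p n m := by
  have hn' : (0 : ℝ) < n := Nat.cast_pos.mpr hn
  have hc : 1 / (n : ℝ) ^ 2 * n + p / n * b = phiLimit b p n * (1 - phiRatio p n) := by
    rw [phiLimit_mul_one_sub_phiRatio hp hn]
    field_simp
  rw [hc, phiClosed, phiClosed]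
  ring

lemma phiClosed_le_phiAux (hp : 0 < p) (hn : 0 < n) (hq : 0 ≤ phiRatio p n) (m : ℕ) :
    phiClosed b p n m ≤ phiAux b p n m := by
  induction m with
  | zero => exact (phiClosed_zero hp hn).le
  | succ m ih =>
    rw [phiClosed_succ hp hn, phiAux_succ_eq]
    gcongr
    exacts [le_max_left _ _, le_max_left _ _, ih.trans (le_max_right _ _)]

lemma phiClosed_mono (hC : 0 ≤ phiLimit b p n) (hq0 : 0 ≤ phiRatio p n)
    (hq1 : phiRatio p n ≤ 1) : Monotone (phiClosed b p n) := by
  intro m k hmk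
  exact mul_le_mul_of_nonneg_left
    (sub_le_sub_left (pow_le_pow_of_le_one hq0 hq1 (by omega)) 1) hC

lemma phiClosed_nonneg (hC : 0 ≤ phiLimit b p n) (hq0 : 0 ≤ phiRatio p n)
    (hq1 : phiRatio p n ≤ 1) (m : ℕ) : 0 ≤ phiClosed b p n m :=
  mul_nonneg hC (sub_nonneg.mpr (pow_le_one₀ hq0 hq1))

lemma phiAux_eq_phiClosed (hp : 0 < p) (hn : 0 < n) (hbn : b ≤ n) (hC : 0 ≤ phiLimit b p n)
    (hq0 : 0 ≤ phiRatio p n) (hq1 : phiRatio p n ≤ 1) {m : ℕ} (hm : phiClosed b p n m ≤ b) :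
    phiAux b p n m = phiClosed b p n m := by
  induction m with
  | zero => exact (phiClosed_zero hp hn).symm
  | succ m ih =>
    have hprev : phiClosed b p n m ≤ b :=
      (phiClosed_mono hC hq0 hq1 m.le_succ).trans hm
    have h0 := phiClosed_nonneg hC hq0 hq1 m
    rw [phiAux_succ_eq, ih hprev, max_eq_left (hprev.trans hbn), max_eq_left hprev,
      max_eq_right h0, phiClosed_succ hp hn]

lemma phiClosed_le_iff (ha : 0 < a) (hq0 : 0 < phiRatio p n) (hq1 : phiRatio p n < 1)
    (haC : a < phiLimit b p n) (m : ℕ) :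
    phiClosed b p n m ≤ a ↔ (m : ℝ) + 1 ≤ crossingTime a b p n := by
  have hC : 0 < phiLimit b p n := ha.trans haC
  have hr : 0 < 1 - a / phiLimit b p n := sub_pos.mpr ((div_lt_one hC).mpr haC)
  calc phiClosed b p n m ≤ a ↔ 1 - a / phiLimit b p n ≤ phiRatio p n ^ (m + 1) := by
        rw [phiClosed, ← le_div_iff₀' hC, sub_le_comm]
    _ ↔ Real.log (1 - a / phiLimit b p n) ≤ ((m : ℝ) + 1) * Real.log (phiRatio p n) := by
        rw [← Real.log_le_log_iff hr (pow_pos hq0 _), Real.log_pow]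
        push_cast
        rfl
    _ ↔ (m : ℝ) + 1 ≤ crossingTime a b p n :=
        (le_div_iff_of_neg (Real.log_neg hq0 hq1)).symm

lemma phiAux_le_iff (ha : 0 < a) (hab : a < b) (hp : 0 < p) (hn : 0 < n) (hbn : b ≤ n)
    (hq : 0 < phiRatio p n) (haC : a < phiLimit b p n) (m : ℕ) :
    phiAux b p n m ≤ a ↔ (m : ℝ) + 1 ≤ crossingTime a b p n := by
  have hq1 := phiRatio_lt_one hp hn
  rw [← phiClosed_le_iff ha hq hq1 haC]
  refine ⟨(phiClosed_le_phiAux hp hn hq.le m).trans, fun h => ?_⟩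
  rwa [phiAux_eq_phiClosed hp hn hbn (ha.trans haC).le hq.le hq1.le (h.trans hab.le)]

lemma jn_eq_ceil (ha : 0 < a) (hab : a < b) (hp : 0 < p) (hn : 0 < n) (hbn : b ≤ n)
    (hq : 0 < phiRatio p n) (haC : a < phiLimit b p n)
    (hR1 : 1 ≤ crossingTime a b p n) (hRn : crossingTime a b p n ≤ n) :
    jn a b p n = ⌈(n : ℝ) + 1 - crossingTime a b p n⌉₊ := by
  have hphi : ∀ k ≤ n, phi b p n k ≤ a ↔ (n : ℝ) + 1 - crossingTime a b p n ≤ k := by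
    intro k hk
    rw [phi, phiAux_le_iff ha hab hp hn hbn hq haC, Nat.cast_sub hk]
    constructor <;> intro h <;> linarith
  set K := ⌈(n : ℝ) + 1 - crossingTime a b p n⌉₊
  have hKn : K ≤ n := Nat.ceil_le.mpr (by linarith)
  have hK : K ∈ {k : ℕ | 1 ≤ k ∧ k ≤ n ∧ phi b p n k ≤ a} :=
    ⟨Nat.one_le_ceil_iff.mpr (by linarith), hKn, (hphi K hKn).mpr (Nat.le_ceil _)⟩
  refine le_antisymm (Nat.sInf_le hK) (le_csInf ⟨K, hK⟩ ?_)
  rintro k ⟨-, hkn, hka⟩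
  exact Nat.ceil_le.mpr ((hphi k hkn).mp hka)

end ClosedForm

section Asymptotics

lemma tendsto_mul_log_of_tendsto_mul_sub_one {α : Type*} {l : Filter α} {g f : α → ℝ} {L : ℝ}
    (hg : ∀ᶠ x in l, 0 ≤ g x) (hf : Tendsto f l (𝓝 1))
    (h : Tendsto (fun x => g x * (f x - 1)) l (𝓝 L)) :
    Tendsto (fun x => g x * Real.log (f x)) l (𝓝 L) := by
  have hlow : Tendsto (fun x => g x * (f x - 1) / f x) l (𝓝 L) := by
    have h' := h.div hf one_ne_zero
    rwa [div_one] at h'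
  refine tendsto_of_tendsto_of_tendsto_of_le_of_le' hlow h ?_ ?_
  · filter_upwards [hg, hf.eventually (lt_mem_nhds one_pos)] with x hgx hfx
    rw [mul_div_assoc, sub_div, div_self hfx.ne', one_div]
    exact mul_le_mul_of_nonneg_left (Real.one_sub_inv_le_log_of_pos hfx) hgx
  · filter_upwards [hg, hf.eventually (lt_mem_nhds one_pos)] with x hgx hfx
    exact mul_le_mul_of_nonneg_left (Real.log_le_sub_one_of_pos hfx) hgx

lemma tendsto_atTop_of_tendsto_div_natCast {u : ℕ → ℝ} {L : ℝ} (hL : 0 < L)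
    (hu : Tendsto (fun n => u n / n) atTop (𝓝 L)) : Tendsto u atTop atTop := by
  refine (hu.pos_mul_atTop hL tendsto_natCast_atTop_atTop).congr' ?_
  filter_upwards [eventually_gt_atTop 0] with n hn
  field_simp

lemma tendsto_natCeil_div_of_tendsto_div {u : ℕ → ℝ} {L : ℝ} (hL : 0 < L)
    (hu : Tendsto (fun n => u n / n) atTop (𝓝 L)) :
    Tendsto (fun n => (⌈u n⌉₊ : ℝ) / n) atTop (𝓝 L) := by
  have htop := tendsto_atTop_of_tendsto_div_natCast hL hu
  have h := (tendsto_nat_ceil_div_atTop.comp htop).mul hu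
  rw [one_mul] at h
  refine h.congr' ?_
  filter_upwards [htop.eventually_gt_atTop 0] with n hn
  simp only [Function.comp_apply]
  field_simp

variable {a b p : ℝ}

lemma tendsto_phiRatio (p : ℝ) : Tendsto (phiRatio p) atTop (𝓝 1) := by
  have h := tendsto_one_div_atTop_nhds_zero_nat (𝕜 := ℝ)
  convert ((tendsto_const_nhds (x := (1 : ℝ))).sub (h.const_mul p)).sub (h.pow 2) using 1
  · ext n
    simp [phiRatio, div_eq_mul_inv]
  · simp

lemma tendsto_phiLimit (hp : p ≠ 0) :
    Tendsto (phiLimit b p) atTop (𝓝 ((1 + b * p) / p)) := by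
  have h : Tendsto (fun n : ℕ => p + 1 / (n : ℝ)) atTop (𝓝 p) := by
    simpa using tendsto_const_nhds.add (tendsto_one_div_atTop_nhds_zero_nat (𝕜 := ℝ))
  exact tendsto_const_nhds.div h hp

lemma tendsto_natCast_mul_log_phiRatio (p : ℝ) :
    Tendsto (fun n : ℕ => (n : ℝ) * Real.log (phiRatio p n)) atTop (𝓝 (-p)) := by
  refine tendsto_mul_log_of_tendsto_mul_sub_one (.of_forall fun n => n.cast_nonneg)
    (tendsto_phiRatio p) ?_
  have h : Tendsto (fun n : ℕ => -(p + 1 / (n : ℝ))) atTop (𝓝 (-p)) := by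
    simpa using (tendsto_const_nhds.add (tendsto_one_div_atTop_nhds_zero_nat (𝕜 := ℝ))).neg
  refine h.congr' ?_
  filter_upwards [eventually_gt_atTop 0] with n hn
  have hn' : (0 : ℝ) < n := Nat.cast_pos.mpr hn
  unfold phiRatio
  field_simp
  ring

lemma tendsto_crossingTime_div (hp : p ≠ 0) (hb : 1 + b * p ≠ 0) (hba : 1 + (b - a) * p ≠ 0) :
    Tendsto (fun n : ℕ => crossingTime a b p n / n) atTop
      (𝓝 (Real.log ((1 + (b - a) * p) / (1 + b * p)) / -p)) := by
  have harg : Tendsto (fun n => 1 - a / phiLimit b p n) atTop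
      (𝓝 ((1 + (b - a) * p) / (1 + b * p))) := by
    convert (tendsto_const_nhds (x := (1 : ℝ))).sub
      ((tendsto_const_nhds (x := a)).div (tendsto_phiLimit (b := b) hp) (div_ne_zero hb hp))
      using 2
    · rfl
    · field_simp
      ring
  have hlog := (Real.continuousAt_log (div_ne_zero hba hb)).tendsto.comp harg
  refine (hlog.div (tendsto_natCast_mul_log_phiRatio p) (neg_ne_zero.mpr hp)).congr fun n => ?_
  rw [crossingTime, div_div, mul_comm]
  rfl

end Asymptotics

section Limit

variable {a b p : ℝ}

lemma tendsto_jn_div (ha : 0 < a) (hab : a < b) (hp : 0 < p)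
    (hμ0 : 0 < Real.log ((1 + (b - a) * p) / (1 + b * p)) / -p)
    (hμ1 : Real.log ((1 + (b - a) * p) / (1 + b * p)) / -p < 1) :
    Tendsto (fun n : ℕ => (jn a b p n : ℝ) / n) atTop
      (𝓝 (1 - Real.log ((1 + (b - a) * p) / (1 + b * p)) / -p)) := by
  set μ := Real.log ((1 + (b - a) * p) / (1 + b * p)) / -p
  have hb : 0 < b := ha.trans hab
  have hR := tendsto_crossingTime_div hp.ne' (by positivity : 1 + b * p ≠ 0)
    (by nlinarith : 1 + (b - a) * p ≠ 0)
  have hu : Tendsto (fun n : ℕ => ((n : ℝ) + 1 - crossingTime a b p n) / n) atTop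
      (𝓝 (1 - μ)) := by
    have h := ((tendsto_const_nhds (x := (1 : ℝ))).add
      (tendsto_one_div_atTop_nhds_zero_nat (𝕜 := ℝ))).sub hR
    rw [add_zero] at h
    refine h.congr' ?_
    filter_upwards [eventually_gt_atTop 0] with n hn
    field_simp
  have haC : a < (1 + b * p) / p := by
    rw [lt_div_iff₀ hp]
    nlinarith
  refine (tendsto_natCeil_div_of_tendsto_div (sub_pos.mpr hμ1) hu).congr' ?_
  filter_upwards [eventually_gt_atTop 0,
    tendsto_natCast_atTop_atTop.eventually_ge_atTop b,
    (tendsto_phiRatio p).eventually (lt_mem_nhds one_pos),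
    (tendsto_phiLimit hp.ne').eventually (lt_mem_nhds haC),
    (tendsto_atTop_of_tendsto_div_natCast hμ0 hR).eventually_ge_atTop 1,
    hR.eventually (gt_mem_nhds hμ1)] with n hn hbn hq hC hR1 hRn
  rw [jn_eq_ceil ha hab hp hn hbn hq hC hR1
    ((div_lt_one (Nat.cast_pos.mpr hn)).mp hRn).le]

lemma log_ratio_mem_Ioo (ha : 0 < a) (hab : a < b) (hp : 0 < p)
    (hlog : Real.log (1 + p * b) < p) :
    Real.log ((1 + (b - a) * p) / (1 + b * p)) ∈ Set.Ioo (-p) 0 := by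
  have hb : 0 < b := ha.trans hab
  have hbp : 0 < 1 + b * p := by positivity
  have hbap : 0 < 1 + (b - a) * p := by nlinarith
  constructor
  · calc -p < -Real.log (1 + b * p) := by rw [mul_comm]; linarith
      _ ≤ Real.log (1 + (b - a) * p) - Real.log (1 + b * p) := by
        have := Real.log_nonneg (by nlinarith : (1 : ℝ) ≤ 1 + (b - a) * p)
        linarith
      _ = _ := (Real.log_div hbap.ne' hbp.ne').symm
  · exact Real.log_neg (div_pos hbap hbp) ((div_lt_one hbp).mpr (by nlinarith))

end Limit

theorem stmt_3_general (a b p : ℝ)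
    (ha : 0 < a) (ha1 : a < 1) (hb : 1 < b) (hp : 0 < p)
    (hlog : Real.log (1 + p * b) < p)
    :
    Filter.Tendsto (fun n : ℕ => (jn a b p n : ℝ) / n) Filter.atTop
        (nhds (1 + (1 / p) * Real.log ((1 + (b - a) * p) / (1 + b * p))))
      ∧ 0 < 1 + (1 / p) * Real.log ((1 + (b - a) * p) / (1 + b * p))
      ∧ 1 + (1 / p) * Real.log ((1 + (b - a) * p) / (1 + b * p)) < 1 := by
  have hab : a < b := ha1.trans hb
  obtain ⟨hlow, hneg⟩ := log_ratio_mem_Ioo ha hab hp hlog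
  set ℓ := Real.log ((1 + (b - a) * p) / (1 + b * p))
  have hμ : 1 + 1 / p * ℓ = 1 - ℓ / -p := by
    field_simp
    ring
  have hμ1 : ℓ / -p < 1 := (div_lt_one_of_neg (by linarith)).mpr hlow
  have hμ0 : 0 < ℓ / -p := div_pos_of_neg_of_neg hneg (by linarith)
  rw [hμ]
  exact ⟨tendsto_jn_div ha hab hp hμ0 hμ1, by linarith, by linarith⟩

/-- `j_n/n → 1 + (1/p)·log((1+(b−a)·p)/(1+b·p))` as `n → ∞`, and this limit lies
in `(0,1)`; in particular `j_n ∼ n·(1 + (1/p)·log((1+(b−a)·p)/(1+b·p)))`. -/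
theorem stmt_3 (a b p : ℝ)
    (ha : 0 < a) (ha1 : a < 1) (hb : 1 < b) (hp : 0 < p)
    (hlog : Real.log (1 + p * b) < p)
    (hI : (1 + b * p) / (1 + (b - a) * p) * Real.log ((1 + b * p) / (1 + (b - a) * p)) ≤ a * p)
    (hII : (2 - p) * (b - a) < 1)
    (hIII : (1 - (2 - p) * (b - a)) / (1 + p * (b - a))
        < 1 + (1 / p) * Real.log ((1 + p * (b - a)) / (1 + p * b)))
    (hIV : 0 ≤ 2 + p * b * (1 - p * (b - a)))
    (hV : b * p * (1 + (b - a) * p) / ((1 + p * b) * Real.log (1 + p * b)) < 1)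
    :
    Filter.Tendsto (fun n : ℕ => (jn a b p n : ℝ) / n) Filter.atTop
        (nhds (1 + (1 / p) * Real.log ((1 + (b - a) * p) / (1 + b * p))))
      ∧ 0 < 1 + (1 / p) * Real.log ((1 + (b - a) * p) / (1 + b * p))
      ∧ 1 + (1 / p) * Real.log ((1 + (b - a) * p) / (1 + b * p)) < 1 :=
  stmt_3_general a b p ha ha1 hb hp hlog
end

section
/- The acceptance time k_n satisfies lim_{n→∞} k_n/n = 1 + (1/p)·log(1/(1+b·p)), and this limit lies in (0,1); in particular k_n ~ n·(1 + (1/p)·log(1/(1+b·p))) as n → ∞. -/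
open Filter Real Topology Finset

lemma sInf_threshold_bounds {P : ℕ → Prop} {n : ℕ} {x : ℝ} (hn : 1 ≤ n) (hPn : P n)
    (hP : ∀ k ≤ n, P k ↔ x ≤ k) :
    x ≤ (sInf {k | 1 ≤ k ∧ k ≤ n ∧ P k} : ℕ) ∧
      ((sInf {k | 1 ≤ k ∧ k ≤ n ∧ P k} : ℕ) : ℝ) ≤ max 1 (x + 1) := by
  set S := {k | 1 ≤ k ∧ k ≤ n ∧ P k}
  obtain ⟨-, hle, hPs⟩ : sInf S ∈ S := Nat.sInf_mem ⟨n, hn, le_rfl, hPn⟩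
  have hceil : max 1 ⌈x⌉₊ ≤ n := max_le hn (Nat.ceil_le.mpr ((hP n le_rfl).mp hPn))
  have hmem : max 1 ⌈x⌉₊ ∈ S :=
    ⟨le_max_left _ _, hceil, (hP _ hceil).mpr <| (Nat.le_ceil x).trans <| by
      exact_mod_cast le_max_right _ _⟩
  refine ⟨(hP _ hle).mp hPs, ?_⟩
  calc ((sInf S : ℕ) : ℝ) ≤ (max 1 ⌈x⌉₊ : ℕ) := by exact_mod_cast Nat.sInf_le hmem
    _ ≤ max 1 (x + 1) := by
      rw [Nat.cast_max, Nat.cast_one]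
      refine max_le (le_max_left _ _) ?_
      rcases le_or_gt 0 x with hx | hx
      · exact le_max_of_le_right (Nat.ceil_lt_add_one hx).le
      · simp [Nat.ceil_eq_zero.mpr hx.le]

noncomputable def phiRate (p : ℝ) (n : ℕ) : ℝ := 1 - p / n - 1 / (n : ℝ) ^ 2

noncomputable def crossLevel (b p : ℝ) (n : ℕ) : ℝ := (1 - b / n) / (1 + b * p)

noncomputable def knApprox (b p : ℝ) (n : ℕ) : ℝ :=
  n + 1 - log (crossLevel b p n) / log (phiRate p n)

section
variable {b p : ℝ} {n m : ℕ}

lemma phiAux_succ_of_le (hbn : b ≤ n) (h0 : 0 ≤ phiAux b p n m) (hb : phiAux b p n m ≤ b) :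
    phiAux b p n (m + 1) = (1 + b * p) / n + phiRate p n * phiAux b p n m := by
  rw [phiAux, max_eq_left (hb.trans hbn), max_eq_left hb, max_eq_right h0, phiRate]
  rcases eq_or_ne (n : ℝ) 0 with hn | hn
  · simp [hn]
  · field_simp

lemma phiAux_monotone (hp : 0 ≤ p) (hr : 0 ≤ phiRate p n) : Monotone (phiAux b p n) := by
  refine monotone_nat_of_le_succ fun m => ?_
  have hr' : 0 ≤ 1 - p / n - 1 / (n : ℝ) ^ 2 := hr
  set x := phiAux b p n m
  calc x = 1 / (n : ℝ) ^ 2 * x + p / n * x + (1 - p / n - 1 / (n : ℝ) ^ 2) * x := by ring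
    _ ≤ phiAux b p n (m + 1) := by
      rw [phiAux]
      gcongr
      exacts [le_max_right _ _, le_max_right _ _, le_max_right _ _]

lemma phiAux_eq_geom_sum (hbn : b ≤ n) (hbp : 0 ≤ 1 + b * p) (hr : 0 ≤ phiRate p n)
    (hm : ∀ j < m, phiAux b p n j ≤ b) :
    phiAux b p n m = (1 + b * p) / n * ∑ j ∈ range (m + 1), phiRate p n ^ j := by
  induction m with
  | zero => simp [phiAux]
  | succ m ih =>
    have ih := ih fun j hj => hm j (by omega)
    have h0 : 0 ≤ phiAux b p n m := by rw [ih]; positivity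
    rw [phiAux_succ_of_le hbn h0 (hm m m.lt_succ_self), ih, geom_sum_succ (n := m + 1)]
    ring

lemma sub_mul_geom_sum_phiRate (hp : 0 ≤ p) (hbp : 1 + b * p ≠ 0) (hn : 0 < n) :
    b - (1 + b * p) / n * ∑ j ∈ range (m + 1), phiRate p n ^ j
      = (1 + b * p) * n / (p * n + 1) * (phiRate p n ^ (m + 1) - crossLevel b p n) := by
  have hn' : (n : ℝ) ≠ 0 := by positivity
  have hpn : p * n + 1 ≠ 0 := by positivity
  have hrate : (1 + b * p) * n / (p * n + 1) * (phiRate p n - 1) = -((1 + b * p) / n) := by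
    rw [phiRate]; field_simp; ring
  have hlevel : (1 + b * p) * n / (p * n + 1) * (crossLevel b p n - 1) = -b := by
    rw [crossLevel]; field_simp; ring
  linear_combination ((1 + b * p) * n / (p * n + 1)) * geom_sum_mul (phiRate p n) (m + 1)
    - (∑ j ∈ range (m + 1), phiRate p n ^ j) * hrate + hlevel

lemma phiRate_le_one (hp : 0 ≤ p) : phiRate p n ≤ 1 := by
  have : 0 ≤ p / n + 1 / (n : ℝ) ^ 2 := by positivity
  rw [phiRate]
  linarith

lemma phiAux_le_iff_s4 (hp : 0 < p) (hb : 0 < b) (hbn : b ≤ n) (hr : 0 ≤ phiRate p n) :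
    phiAux b p n m ≤ b ↔ crossLevel b p n ≤ phiRate p n ^ (m + 1) := by
  have hn : 0 < n := by exact_mod_cast hb.trans_le hbn
  have hbp : 0 < 1 + b * p := by positivity
  have key : ∀ m, (∀ j < m, phiAux b p n j ≤ b) →
      (phiAux b p n m ≤ b ↔ crossLevel b p n ≤ phiRate p n ^ (m + 1)) := by
    intro m hm
    rw [← sub_nonneg, ← sub_nonneg (a := _ ^ _), phiAux_eq_geom_sum hbn hbp.le hr hm,
      sub_mul_geom_sum_phiRate hp.le hbp.ne' hn, mul_nonneg_iff_of_pos_left (by positivity)]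
  have hmono := phiAux_monotone (b := b) hp.le hr
  induction m with
  | zero => exact key 0 (by simp)
  | succ m ih =>
    refine ⟨fun h => (key _ fun j hj => (hmono (by omega)).trans h).mp h, fun h => ?_⟩
    have hm : phiAux b p n m ≤ b :=
      ih.mpr (h.trans (pow_le_pow_of_le_one hr (phiRate_le_one hp.le) (by omega)))
    exact (key _ fun j hj => (hmono (by omega)).trans hm).mpr h

lemma phi_le_iff (hp : 0 < p) (hb : 0 < b) (hbn : b < n) (hr : 0 < phiRate p n) {k : ℕ}
    (hk : k ≤ n) : phi b p n k ≤ b ↔ knApprox b p n ≤ k := by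
  have hn : (0 : ℝ) < n := hb.trans hbn
  have hlevel : 0 < crossLevel b p n := by
    have : b / n < 1 := (div_lt_one hn).mpr hbn
    rw [crossLevel]
    exact div_pos (by linarith) (by positivity)
  have hr1 : phiRate p n < 1 := by
    rw [phiRate]
    have : 0 < p / n + 1 / (n : ℝ) ^ 2 := by positivity
    linarith
  rw [phi, phiAux_le_iff_s4 hp hb hbn.le hr.le, ← log_le_log_iff hlevel (pow_pos hr _), log_pow,
    ← le_div_iff_of_neg (log_neg hr hr1), knApprox]
  push_cast [hk]
  constructor <;> intro <;> linarith

lemma kn_bounds (hp : 0 < p) (hb : 0 < b) (hbn : b < n) (hr : 0 < phiRate p n)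
    (hstart : (1 + b * p) / n ≤ b) :
    knApprox b p n ≤ kn b p n ∧ (kn b p n : ℝ) ≤ max 1 (knApprox b p n + 1) :=
  sInf_threshold_bounds (Nat.cast_pos.mp (hb.trans hbn))
    (by simpa [phi, phiAux] using hstart) fun _ hk => phi_le_iff hp hb hbn hr hk

lemma tendsto_phiRate : Tendsto (phiRate p) atTop (𝓝 1) := by
  have := ((tendsto_const_nhds (x := (1 : ℝ))).sub (tendsto_const_div_atTop_nhds_zero_nat p)).sub
    (tendsto_one_div_atTop_nhds_zero_nat.pow 2)
  unfold phiRate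
  simpa [div_pow] using this

lemma tendsto_natCast_mul_log_phiRate :
    Tendsto (fun n : ℕ => n * log (phiRate p n)) atTop (𝓝 (-p)) := by
  have hg : Tendsto (fun x : ℝ => x * (-p / x - 1 / x ^ 2)) atTop (𝓝 (-p)) := by
    have : Tendsto (fun x : ℝ => -p - x⁻¹) atTop (𝓝 (-p - 0)) :=
      tendsto_const_nhds.sub tendsto_inv_atTop_zero
    refine (sub_zero (-p) ▸ this).congr' ?_
    filter_upwards [eventually_ne_atTop 0] with x hx
    field_simp
  refine ((tendsto_mul_log_one_add_of_tendsto hg).comp tendsto_natCast_atTop_atTop).congr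
    fun n => ?_
  simp only [Function.comp, phiRate]
  ring_nf

lemma tendsto_crossLevel : Tendsto (crossLevel b p) atTop (𝓝 (1 / (1 + b * p))) := by
  have := ((tendsto_const_nhds (x := (1 : ℝ))).sub
    (tendsto_const_div_atTop_nhds_zero_nat b)).div_const (1 + b * p)
  unfold crossLevel
  simpa using this

lemma tendsto_knApprox_div (hp : 0 < p) (hbp : 1 + b * p ≠ 0) :
    Tendsto (fun n : ℕ => knApprox b p n / n) atTop
      (𝓝 (1 + 1 / p * log (1 / (1 + b * p)))) := by
  have h := ((tendsto_const_nhds (x := (1 : ℝ))).add tendsto_one_div_atTop_nhds_zero_nat).sub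
    ((tendsto_crossLevel.log (one_div_ne_zero hbp)).div tendsto_natCast_mul_log_phiRate
      (neg_ne_zero.mpr hp.ne'))
  have hlim : 1 + 0 - log (1 / (1 + b * p)) / -p = 1 + 1 / p * log (1 / (1 + b * p)) := by
    field_simp
    ring
  rw [hlim] at h
  refine h.congr' ?_
  filter_upwards [eventually_ne_atTop 0] with n hn
  have hn : (n : ℝ) ≠ 0 := Nat.cast_ne_zero.mpr hn
  simp only [Pi.div_apply, knApprox]
  field_simp

lemma tendsto_kn_div (hp : 0 < p) (hb : 0 < b) (hlim : 0 ≤ 1 + 1 / p * log (1 / (1 + b * p))) :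
    Tendsto (fun n : ℕ => (kn b p n : ℝ) / n) atTop
      (𝓝 (1 + 1 / p * log (1 / (1 + b * p)))) := by
  have happrox := tendsto_knApprox_div (b := b) hp (by positivity)
  have hupper : Tendsto (fun n : ℕ => max (1 / (n : ℝ)) (knApprox b p n / n + 1 / n)) atTop
      (𝓝 (1 + 1 / p * log (1 / (1 + b * p)))) := by
    have := tendsto_one_div_atTop_nhds_zero_nat.max
      (happrox.add (tendsto_one_div_atTop_nhds_zero_nat (𝕜 := ℝ)))
    rwa [add_zero, max_eq_right hlim] at this
  have hbounds : ∀ᶠ n : ℕ in atTop, knApprox b p n ≤ kn b p n ∧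
      (kn b p n : ℝ) ≤ max 1 (knApprox b p n + 1) := by
    filter_upwards [tendsto_natCast_atTop_atTop.eventually_gt_atTop b,
      tendsto_phiRate.eventually_const_lt zero_lt_one,
      (tendsto_const_div_atTop_nhds_zero_nat (1 + b * p)).eventually_lt_const hb]
      with n hbn hr hstart
    exact kn_bounds hp hb hbn hr hstart.le
  refine tendsto_of_tendsto_of_tendsto_of_le_of_le' happrox hupper ?_ ?_
  · filter_upwards [hbounds] with n h
    exact div_le_div_of_nonneg_right h.1 (Nat.cast_nonneg n)
  · filter_upwards [hbounds, eventually_gt_atTop 0] with n h hn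
    have hn : (0 : ℝ) < n := Nat.cast_pos.mpr hn
    rw [← add_div, max_div_div_right hn.le]
    exact div_le_div_of_nonneg_right h.2 hn.le
end

theorem stmt_4_general (b p : ℝ)
    (hb : 1 < b) (hp : 0 < p)
    (hlog : Real.log (1 + p * b) < p)
    :
    Filter.Tendsto (fun n : ℕ => (kn b p n : ℝ) / n) Filter.atTop
        (nhds (1 + (1 / p) * Real.log (1 / (1 + b * p))))
      ∧ 0 < 1 + (1 / p) * Real.log (1 / (1 + b * p))
      ∧ 1 + (1 / p) * Real.log (1 / (1 + b * p)) < 1 := by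
  have hb0 : 0 < b := by linarith
  have hlog_eq : 1 / p * log (1 / (1 + b * p)) = -(log (1 + p * b) / p) := by
    rw [one_div (1 + b * p), log_inv, mul_comm b p]
    ring
  have hpos : 0 < 1 + 1 / p * log (1 / (1 + b * p)) := by
    rw [hlog_eq, ← sub_eq_add_neg, sub_pos, div_lt_one hp]
    exact hlog
  refine ⟨tendsto_kn_div hp hb0 hpos.le, hpos, ?_⟩
  rw [hlog_eq, add_neg_lt_iff_lt_add, lt_add_iff_pos_right]
  exact div_pos (log_pos (by nlinarith)) hp

/-- `k_n/n → 1 + (1/p)·log(1/(1+b·p))` as `n → ∞`, and this limit lies in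
`(0,1)`; in particular `k_n ∼ n·(1 + (1/p)·log(1/(1+b·p)))`. -/
theorem stmt_4 (a b p : ℝ)
    (ha : 0 < a) (ha1 : a < 1) (hb : 1 < b) (hp : 0 < p)
    (hlog : Real.log (1 + p * b) < p)
    (hI : (1 + b * p) / (1 + (b - a) * p) * Real.log ((1 + b * p) / (1 + (b - a) * p)) ≤ a * p)
    (hII : (2 - p) * (b - a) < 1)
    (hIII : (1 - (2 - p) * (b - a)) / (1 + p * (b - a))
        < 1 + (1 / p) * Real.log ((1 + p * (b - a)) / (1 + p * b)))
    (hIV : 0 ≤ 2 + p * b * (1 - p * (b - a)))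
    (hV : b * p * (1 + (b - a) * p) / ((1 + p * b) * Real.log (1 + p * b)) < 1)
    :
    Filter.Tendsto (fun n : ℕ => (kn b p n : ℝ) / n) Filter.atTop
        (nhds (1 + (1 / p) * Real.log (1 / (1 + b * p))))
      ∧ 0 < 1 + (1 / p) * Real.log (1 / (1 + b * p))
      ∧ 1 + (1 / p) * Real.log (1 / (1 + b * p)) < 1 :=
  stmt_4_general b p hb hp hlog
end

section
/- There exists N such that for all n ≥ N, k_n ≤ k̄_n; informally, the gambler accepts the value b not having seen the value a later than it accepts the value b after having seen the value a. -/
noncomputable def Gop (b p : ℝ) (n : ℕ) (x : ℝ) : ℝ :=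
  (1 / (n : ℝ) ^ 2) * max (n : ℝ) x + (p / n) * max b x
    + (1 - p / n - 1 / (n : ℝ) ^ 2) * max 0 x

lemma phiAux_succ (b p : ℝ) (n m : ℕ) :
    phiAux b p n (m + 1) = Gop b p n (phiAux b p n m) := rfl

lemma phibarAux_succ (a b p : ℝ) (n m : ℕ) :
    phibarAux a b p n (m + 1)
      = max a (phiAux b p n m) / ((m : ℝ) + 2)
        + (1 - 1 / ((m : ℝ) + 2)) * Gop b p n (phibarAux a b p n m) := rfl

section basics
variable {a b p : ℝ} {n : ℕ}

lemma Gop_nonneg (hb : 0 < b) (hp : 0 < p) (hn : 1 ≤ (n:ℝ))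
    (hs : 0 ≤ 1 - p / n - 1 / (n:ℝ)^2) {x : ℝ} (hx : 0 ≤ x) :
    0 ≤ Gop b p n x := by
  have h1 : (0:ℝ) ≤ 1 / (n:ℝ)^2 := by positivity
  have h2 : (0:ℝ) ≤ p / n := by positivity
  have m1 : (0:ℝ) ≤ max (n:ℝ) x := le_max_of_le_right hx
  have m2 : (0:ℝ) ≤ max b x := le_max_of_le_right hx
  have m3 : (0:ℝ) ≤ max 0 x := le_max_left _ _
  unfold Gop
  positivity

lemma Gop_le (hb : 0 < b) (hp : 0 < p) (hn : 1 ≤ (n:ℝ))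
    (hs : 0 ≤ 1 - p / n - 1 / (n:ℝ)^2) {x : ℝ} (hx : 0 ≤ x) :
    Gop b p n x ≤ x + (1 + b * p) / n := by
  have hn0 : (0:ℝ) < n := by linarith
  have h1 : (0:ℝ) ≤ 1 / (n:ℝ)^2 := by positivity
  have h2 : (0:ℝ) ≤ p / n := by positivity
  have m1 : max (n:ℝ) x ≤ x + n := max_le (by linarith) (by linarith)
  have m2 : max b x ≤ x + b := max_le (by linarith) (by linarith)
  have m3 : max 0 x = x := max_eq_right hx
  have key : (1 / (n:ℝ)^2) * (x + n) + (p / n) * (x + b)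
      + (1 - p / n - 1 / (n:ℝ)^2) * x = x + (1 + b * p) / n + (x * 0) := by
    field_simp
    ring
  unfold Gop
  rw [m3]
  nlinarith [mul_le_mul_of_nonneg_left m1 h1, mul_le_mul_of_nonneg_left m2 h2]

lemma Gop_lip (hs : 0 ≤ 1 - p / n - 1 / (n:ℝ)^2) (hp : 0 < p) (hn : 1 ≤ (n:ℝ))
    {x y : ℝ} (hx : 0 ≤ x) (hxy : x ≤ y) :
    Gop b p n x + (1 - p / n - 1 / (n:ℝ)^2) * (y - x) ≤ Gop b p n y := by
  have h1 : (0:ℝ) ≤ 1 / (n:ℝ)^2 := by positivity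
  have h2 : (0:ℝ) ≤ p / n := by positivity
  have m1 : max (n:ℝ) x ≤ max (n:ℝ) y := max_le_max le_rfl hxy
  have m2 : max b x ≤ max b y := max_le_max le_rfl hxy
  have m3 : max 0 x = x := max_eq_right hx
  have m4 : max 0 y = y := max_eq_right (hx.trans hxy)
  unfold Gop
  rw [m3, m4]
  nlinarith [mul_le_mul_of_nonneg_left m1 h1, mul_le_mul_of_nonneg_left m2 h2]

lemma phiAux_nonneg (hb : 0 < b) (hp : 0 < p) (hn : 1 ≤ (n:ℝ))
    (hs : 0 ≤ 1 - p / n - 1 / (n:ℝ)^2) : ∀ m, 0 ≤ phiAux b p n m := by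
  intro m
  induction m with
  | zero =>
      show (0:ℝ) ≤ (1 + b * p) / n
      have : (0:ℝ) < n := by linarith
      positivity
  | succ m ih => rw [phiAux_succ]; exact Gop_nonneg hb hp hn hs ih

lemma phiAux_le (hb : 0 < b) (hp : 0 < p) (hn : 1 ≤ (n:ℝ))
    (hs : 0 ≤ 1 - p / n - 1 / (n:ℝ)^2) :
    ∀ m, phiAux b p n m ≤ (1 + b * p) * ((m:ℝ) + 1) / n := by
  intro m
  induction m with
  | zero =>
      show (1 + b * p) / n ≤ (1 + b * p) * (((0:ℕ):ℝ) + 1) / n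
      norm_num
  | succ m ih =>
      rw [phiAux_succ]
      have h1 := Gop_le hb hp hn hs (phiAux_nonneg hb hp hn hs m)
      have hn0 : (0:ℝ) < n := by linarith
      push_cast
      have : (1 + b * p) * ((m:ℝ) + 1) / n + (1 + b * p) / n
          = (1 + b * p) * ((m:ℝ) + 1 + 1) / n := by ring
      linarith
end basics

section core
variable {a b p : ℝ} {n : ℕ}

lemma core_step (ha : 0 < a) (hb : 0 < b) (hp : 0 < p) (hn : 1 ≤ (n:ℝ))
    (hs : 0 ≤ 1 - p / n - 1 / (n:ℝ)^2) (m : ℕ)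
    (hle : phiAux b p n m ≤ phibarAux a b p n m) :
    (max a (phiAux b p n m) - phiAux b p n m - (1 + b * p) / n) / ((m:ℝ) + 2)
      + (1 - 1 / ((m:ℝ) + 2)) *
          ((1 - p / n - 1 / (n:ℝ)^2) * (phibarAux a b p n m - phiAux b p n m))
      ≤ phibarAux a b p n (m + 1) - phiAux b p n (m + 1) := by
  have hphi0 : 0 ≤ phiAux b p n m := phiAux_nonneg hb hp hn hs m
  rw [phibarAux_succ, phiAux_succ]
  set φ := phiAux b p n m with hφ
  set ψ := phibarAux a b p n m with hψ
  set w : ℝ := (m:ℝ) + 2 with hw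
  have hm0 : (0:ℝ) ≤ (m:ℝ) := Nat.cast_nonneg m
  have hw2 : (2:ℝ) ≤ w := by rw [hw]; linarith
  have hw0 : (0:ℝ) < w := by linarith
  have hw1 : 0 ≤ 1 - 1 / w := by
    have h12 : 1 / w ≤ 1 / 2 := by
      apply one_div_le_one_div_of_le <;> linarith
    linarith
  have hG1 : Gop b p n φ ≤ φ + (1 + b * p) / n := Gop_le hb hp hn hs hphi0
  have hG2 : Gop b p n φ + (1 - p / n - 1 / (n:ℝ)^2) * (ψ - φ) ≤ Gop b p n ψ :=
    Gop_lip hs hp hn hphi0 hle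
  have key1 : (max a φ - φ - (1 + b * p) / n) / w ≤ (max a φ - Gop b p n φ) / w :=
    (div_le_div_iff_of_pos_right hw0).mpr (by linarith)
  have key2 : (1 - 1/w) * (Gop b p n φ + (1 - p / n - 1 / (n:ℝ)^2) * (ψ - φ))
      ≤ (1 - 1/w) * Gop b p n ψ := mul_le_mul_of_nonneg_left hG2 hw1
  have e1 : (max a φ - Gop b p n φ) / w = max a φ / w - Gop b p n φ / w := by ring
  have e2 : (1 - 1/w) * Gop b p n φ - Gop b p n φ = -(Gop b p n φ / w) := by ring
  linarith [key1, key2]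
end core

section regimes
variable {a b p : ℝ} {n : ℕ}

lemma arith1 (a L p w ν : ℝ) (ha : 0 < a) (hL : 0 < L) (hp : 0 < p)
    (hw : 2 ≤ w) (hν : 1 ≤ ν) (h : w * (2 * L + a * (p + 1)) ≤ a * ν) :
    a / 2 ≤ a / w - L / ν + (1 - 1 / w) * ((1 - p / ν - 1 / ν ^ 2) * (a / 2)) := by
  have hw0 : (0:ℝ) < w := by linarith
  have hν0 : (0:ℝ) < ν := by linarith
  rw [← sub_nonneg]
  have hc : (0:ℝ) < 2 * w * ν ^ 2 := by positivity
  have hid : (a / w - L / ν + (1 - 1 / w) * ((1 - p / ν - 1 / ν ^ 2) * (a / 2)) - a / 2)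
      * (2 * w * ν ^ 2)
      = a * ν ^ 2 - 2 * L * w * ν - a * w * p * ν - a * w + a * p * ν + a := by
    field_simp
    ring
  have hprod : 0 ≤ (a / w - L / ν + (1 - 1 / w) * ((1 - p / ν - 1 / ν ^ 2) * (a / 2)) - a / 2)
      * (2 * w * ν ^ 2) := by
    rw [hid]
    have key := mul_le_mul_of_nonneg_right h (le_of_lt hν0)
    have k2 : 0 ≤ a * w * (ν - 1) := by nlinarith [mul_nonneg ha.le hw0.le]
    nlinarith [key, k2, mul_nonneg (mul_nonneg ha.le hp.le) hν0.le]
  by_contra hcon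
  push_neg at hcon
  nlinarith [mul_pos (neg_pos.mpr hcon) hc]

lemma reg1 (ha : 0 < a) (hb : 0 < b) (hp : 0 < p) (hn : 1 ≤ (n:ℝ))
    (hs : 0 ≤ 1 - p / n - 1 / (n:ℝ)^2)
    (hbase : (1 + b * p) / n ≤ a / 2)
    (M : ℕ) (hM : ((M:ℝ) + 2) * (2 * (1 + b * p) + a * (p + 1)) ≤ a * n) :
    ∀ m, m ≤ M → a / 2 ≤ phibarAux a b p n m - phiAux b p n m := by
  intro m
  induction m with
  | zero =>
      intro _
      show a / 2 ≤ a - (1 + b * p) / n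
      linarith
  | succ m ih =>
      intro hmM
      have hm : m ≤ M := by omega
      have hgap := ih hm
      have hle : phiAux b p n m ≤ phibarAux a b p n m := by linarith
      have hcore := core_step ha hb hp hn hs m hle
      have hphile := phiAux_le hb hp hn hs m
      have hmax : a ≤ max a (phiAux b p n m) := le_max_left _ _
      set w : ℝ := (m:ℝ) + 2 with hw
      have hm0 : (0:ℝ) ≤ (m:ℝ) := Nat.cast_nonneg m
      have hw2 : (2:ℝ) ≤ w := by rw [hw]; linarith
      have hw0 : (0:ℝ) < w := by linarith
      have hn0 : (0:ℝ) < n := by linarith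
      have hL : (0:ℝ) < 1 + b * p := by nlinarith
      -- bound the first term of hcore from below
      have ht1 : (a - (1 + b * p) * w / n) / w
          ≤ (max a (phiAux b p n m) - phiAux b p n m - (1 + b * p) / n) / w := by
        apply (div_le_div_iff_of_pos_right hw0).mpr
        have : (1 + b * p) * ((m:ℝ) + 1) / n + (1 + b * p) / n = (1 + b * p) * w / n := by
          rw [hw]; ring
        linarith
      have ht1' : (a - (1 + b * p) * w / n) / w = a / w - (1 + b * p) / n := by
        field_simp
      have hw1 : 0 ≤ 1 - 1 / w := by
        have h12 : 1 / w ≤ 1 / 2 := by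
          apply one_div_le_one_div_of_le <;> linarith
        linarith
      have ht2 : (1 - 1 / w) * ((1 - p / n - 1 / (n:ℝ)^2) * (a / 2))
          ≤ (1 - 1 / w) * ((1 - p / n - 1 / (n:ℝ)^2)
              * (phibarAux a b p n m - phiAux b p n m)) := by
        apply mul_le_mul_of_nonneg_left _ hw1
        exact mul_le_mul_of_nonneg_left hgap hs
      have harith := arith1 a (1 + b * p) p w n ha hL hp hw2 hn ?_
      · linarith
      · have hwM : w ≤ (M:ℝ) + 2 := by
          rw [hw]
          have : (m:ℝ) ≤ (M:ℝ) := by exact_mod_cast hm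
          linarith
        have hpos : (0:ℝ) < 2 * (1 + b * p) + a * (p + 1) := by nlinarith
        have := mul_le_mul_of_nonneg_right hwM hpos.le
        linarith
end regimes

section regime2
variable {a b p : ℝ} {n : ℕ}

lemma arith2 (A B L p s t ν w : ℝ)
    (hA0 : 0 < A) (hB0 : 0 < B) (hL : 0 < L) (hν : 1 ≤ ν) (hw2 : 2 ≤ w)
    (h0s : 0 ≤ s) (hs1 : s ≤ 1) (ht0 : 0 ≤ t) (ht1 : t ≤ 1)
    (hq0 : 0 ≤ A * t - B)
    (hpν : p ≤ ν * (1 - s))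
    (hmaster : A * ν + L * w * (w + 1) ≤ B * p * w ^ 2) :
    A * t * s - B ≤ ((-(L / ν)) / w + (1 - 1 / w) * (s * ((A * t - B) / w))) * (w + 1) := by
  have hw0 : (0:ℝ) < w := by linarith
  have hν0 : (0:ℝ) < ν := by linarith
  rw [← sub_nonneg]
  have hc : (0:ℝ) < ν * w ^ 2 := by positivity
  have hid : (((-(L / ν)) / w + (1 - 1 / w) * (s * ((A * t - B) / w))) * (w + 1)
        - (A * t * s - B)) * (ν * w ^ 2)
      = -(L * w * (w + 1)) - ν * (A * t * s) + ν * B * (w ^ 2 * (1 - s) + s) := by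
    field_simp
    ring
  have hE : 0 ≤ -(L * w * (w + 1)) - ν * (A * t * s) + ν * B * (w ^ 2 * (1 - s) + s) := by
    have h1 : B * w ^ 2 * p ≤ B * w ^ 2 * (ν * (1 - s)) :=
      mul_le_mul_of_nonneg_left hpν (by positivity)
    have hts : t * s ≤ 1 := by nlinarith
    have h2 : ν * (A * t * s) ≤ ν * A := by
      have : A * (t * s) ≤ A * 1 := mul_le_mul_of_nonneg_left hts hA0.le
      nlinarith
    nlinarith [mul_nonneg (mul_nonneg hν0.le hB0.le) h0s]
  have hprod : 0 ≤ (((-(L / ν)) / w + (1 - 1 / w) * (s * ((A * t - B) / w))) * (w + 1)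
        - (A * t * s - B)) * (ν * w ^ 2) := by rw [hid]; linarith
  by_contra hcon
  push_neg at hcon
  nlinarith [mul_pos (neg_pos.mpr hcon) hc]

set_option maxHeartbeats 1000000 in
lemma reg2 (ha : 0 < a) (hb : 0 < b) (hp : 0 < p) (hn : 1 ≤ (n:ℝ))
    (hs : 0 ≤ 1 - p / n - 1 / (n:ℝ)^2)
    (M : ℕ) (B : ℝ)
    (hregM : a / 2 ≤ phibarAux a b p n M - phiAux b p n M)
    (hB0 : 0 < B)
    (hAB : B ≤ a / 2 * ((M:ℝ) + 2) * (1 - p / n - 1 / (n:ℝ)^2) ^ n)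
    (hB2 : 2 * (1 + b * p) ≤ B * p)
    (hBp1 : a / 2 * (n:ℝ) ≤ (B * p - 2 * (1 + b * p)) * ((M:ℝ) + 2)) :
    ∀ j, M + j ≤ n →
      a / 2 * ((M:ℝ) + 2) * (1 - p / n - 1 / (n:ℝ)^2) ^ j - B
        ≤ (phibarAux a b p n (M + j) - phiAux b p n (M + j)) * (((M + j : ℕ):ℝ) + 2) := by
  have hM0 : (0:ℝ) ≤ (M:ℝ) := Nat.cast_nonneg M
  have hA0 : 0 < a / 2 * ((M:ℝ) + 2) := by positivity
  have hs1 : 1 - p / n - 1 / (n:ℝ)^2 ≤ 1 := by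
    have h1 : 0 ≤ p / (n:ℝ) := by positivity
    have h2 : 0 ≤ 1 / (n:ℝ)^2 := by positivity
    linarith
  intro j
  induction j with
  | zero =>
      intro _
      rw [pow_zero]
      have hgw : a / 2 * ((M:ℝ) + 2) ≤ (phibarAux a b p n M - phiAux b p n M) * ((M:ℝ) + 2) :=
        mul_le_mul_of_nonneg_right hregM (by linarith)
      simp only [Nat.add_zero]
      nlinarith
  | succ j ih =>
      intro hjn
      have hjn' : M + j ≤ n := by omega
      have IH := ih hjn'
      set s' := 1 - p / n - 1 / (n:ℝ)^2 with hs'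
      clear_value s'
      have hsnj : s' ^ n ≤ s' ^ j := pow_le_pow_of_le_one hs hs1 (show j ≤ n by omega)
      have hq0 : 0 ≤ a / 2 * ((M:ℝ) + 2) * s' ^ j - B := by
        have := mul_le_mul_of_nonneg_left hsnj hA0.le
        linarith
      set w : ℝ := ((M + j : ℕ):ℝ) + 2 with hw
      clear_value w
      have hMj0 : (0:ℝ) ≤ ((M + j : ℕ):ℝ) := Nat.cast_nonneg _
      have hw2 : (2:ℝ) ≤ w := by rw [hw]; linarith
      have hw0 : (0:ℝ) < w := by linarith
      have hwW : (M:ℝ) + 2 ≤ w := by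
        rw [hw]
        have : (M:ℝ) ≤ ((M + j : ℕ):ℝ) := by push_cast; linarith [(Nat.cast_nonneg j : (0:ℝ) ≤ (j:ℕ))]
        linarith
      have hgap : 0 ≤ phibarAux a b p n (M + j) - phiAux b p n (M + j) := by
        by_contra hcon
        push_neg at hcon
        have : (phibarAux a b p n (M + j) - phiAux b p n (M + j)) * w < 0 :=
          mul_neg_of_neg_of_pos hcon hw0
        nlinarith [IH, hq0, this]
      have hle : phiAux b p n (M + j) ≤ phibarAux a b p n (M + j) := by linarith
      have hcore := core_step ha hb hp hn (hs' ▸ hs) (M + j) hle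
      rw [← hs', ← hw] at hcore
      -- lower bound pieces
      have hL0 : (0:ℝ) < 1 + b * p := by nlinarith
      have hn0 : (0:ℝ) < n := by linarith
      have ht1 : (-( (1 + b * p) / n)) / w
          ≤ (max a (phiAux b p n (M + j)) - phiAux b p n (M + j) - (1 + b * p) / n) / w := by
        apply (div_le_div_iff_of_pos_right hw0).mpr
        have := le_max_right a (phiAux b p n (M + j))
        linarith
      have hgw : (a / 2 * ((M:ℝ) + 2) * s' ^ j - B) / w
          ≤ phibarAux a b p n (M + j) - phiAux b p n (M + j) := (div_le_iff₀ hw0).mpr IH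
      have hw1 : 0 ≤ 1 - 1 / w := by
        have h12 : 1 / w ≤ 1 / 2 := by
          apply one_div_le_one_div_of_le <;> linarith
        linarith
      have ht2 : (1 - 1 / w) * (s' * ((a / 2 * ((M:ℝ) + 2) * s' ^ j - B) / w))
          ≤ (1 - 1 / w) * (s' * (phibarAux a b p n (M + j) - phiAux b p n (M + j))) :=
        mul_le_mul_of_nonneg_left (mul_le_mul_of_nonneg_left hgw hs) hw1
      have hlow : (-( (1 + b * p) / n)) / w
            + (1 - 1 / w) * (s' * ((a / 2 * ((M:ℝ) + 2) * s' ^ j - B) / w))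
          ≤ phibarAux a b p n (M + j + 1) - phiAux b p n (M + j + 1) := by
        calc _ ≤ (max a (phiAux b p n (M + j)) - phiAux b p n (M + j) - (1 + b * p) / n) / w
            + (1 - 1 / w) * (s' * (phibarAux a b p n (M + j) - phiAux b p n (M + j))) := by
              linarith
        _ ≤ _ := hcore
      -- master inequality
      have hmaster : a / 2 * ((M:ℝ) + 2) * (n:ℝ) + (1 + b * p) * w * (w + 1)
          ≤ B * p * w ^ 2 := by
        have hBp2L : 0 ≤ B * p - 2 * (1 + b * p) := by linarith
        have k1 := mul_le_mul_of_nonneg_right hBp1 (by linarith : (0:ℝ) ≤ (M:ℝ) + 2)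
        have k2 : 0 ≤ (B * p - 2 * (1 + b * p)) * ((w - ((M:ℝ)+2)) * w) :=
          mul_nonneg hBp2L (mul_nonneg (by linarith) hw0.le)
        have k3 : 0 ≤ (B * p - 2 * (1 + b * p)) * ((w - ((M:ℝ)+2)) * ((M:ℝ)+2)) :=
          mul_nonneg hBp2L (mul_nonneg (by linarith) (by linarith))
        have k4 : 0 ≤ (1 + b * p) * (w * (w - 1)) :=
          mul_nonneg hL0.le (mul_nonneg hw0.le (by linarith))
        nlinarith [k1, k2, k3, k4]
      have hpν : p ≤ (n:ℝ) * (1 - s') := by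
        have : (n:ℝ) * (1 - s') = p + 1 / n := by
          rw [hs']
          field_simp
          ring
        rw [this]
        have : 0 ≤ 1 / (n:ℝ) := by positivity
        linarith
      have hsj0 : 0 ≤ s' ^ j := pow_nonneg hs j
      have hsj1 : s' ^ j ≤ 1 := pow_le_one₀ hs hs1
      have harith := arith2 (a / 2 * ((M:ℝ) + 2)) B (1 + b * p) p s' (s' ^ j) (n:ℝ) w
        hA0 hB0 hL0 hn hw2 hs hs1 hsj0 hsj1 hq0 hpν hmaster
      have hcast : (((M + (j + 1) : ℕ)):ℝ) + 2 = w + 1 := by rw [hw]; push_cast; ring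
      rw [hcast]
      have hfin := mul_le_mul_of_nonneg_right hlow (by linarith : (0:ℝ) ≤ w + 1)
      calc a / 2 * ((M:ℝ) + 2) * s' ^ (j + 1) - B
          = a / 2 * ((M:ℝ) + 2) * s' ^ j * s' - B := by ring
        _ ≤ _ := by
            have : M + (j + 1) = M + j + 1 := by omega
            rw [this]
            exact le_trans harith hfin
end regime2

section final
variable {a b p : ℝ} {n : ℕ}

lemma exp_le_one_sub (c : ℝ) (hc0 : 0 ≤ c) (hc2 : c ≤ 1/2) :
    Real.exp (-(2*c)) ≤ 1 - c := by
  have e1 : (1:ℝ) + c ≤ Real.exp c := by linarith [Real.add_one_le_exp c]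
  have e2 : (1+c)^2 ≤ Real.exp (2*c) := by
    rw [show (2:ℝ)*c = c + c by ring, Real.exp_add]
    nlinarith [Real.exp_pos c]
  have hepos := Real.exp_pos (2*c)
  have h3 : 0 ≤ c * (1 - c - c^2) := mul_nonneg hc0 (by nlinarith)
  have key : 1 ≤ (1-c) * Real.exp (2*c) := by
    nlinarith [mul_le_mul_of_nonneg_left e2 (show (0:ℝ) ≤ 1 - c by linarith), h3]
  rw [Real.exp_neg, inv_eq_one_div, div_le_iff₀ hepos]
  linarith

lemma pow_exp_bound (c : ℝ) (n : ℕ) (hc0 : 0 ≤ c) (hc2 : c ≤ 1/2) :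
    Real.exp ((n:ℝ) * (-(2*c))) ≤ (1 - c)^n := by
  rw [Real.exp_nat_mul]
  exact pow_le_pow_left₀ (Real.exp_pos _).le (exp_le_one_sub c hc0 hc2) n

lemma gap_nonneg (ha : 0 < a) (hb : 0 < b) (hp : 0 < p) (hn : 1 ≤ (n:ℝ))
    (hs : 0 ≤ 1 - p / n - 1 / (n:ℝ)^2)
    (hbase : (1 + b * p) / n ≤ a / 2)
    (M : ℕ) (B : ℝ)
    (hM : ((M:ℝ) + 2) * (2 * (1 + b * p) + a * (p + 1)) ≤ a * n)
    (hB0 : 0 < B)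
    (hAB : B ≤ a / 2 * ((M:ℝ) + 2) * (1 - p / n - 1 / (n:ℝ)^2) ^ n)
    (hB2 : 2 * (1 + b * p) ≤ B * p)
    (hBp1 : a / 2 * (n:ℝ) ≤ (B * p - 2 * (1 + b * p)) * ((M:ℝ) + 2)) :
    ∀ m, m ≤ n → phiAux b p n m ≤ phibarAux a b p n m := by
  intro m hm
  have hregM := reg1 ha hb hp hn hs hbase M hM M le_rfl
  rcases le_or_gt m M with hcase | hcase
  · have := reg1 ha hb hp hn hs hbase M hM m hcase
    linarith
  · obtain ⟨j, rfl⟩ : ∃ j, m = M + j := ⟨m - M, by omega⟩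
    have h2 := reg2 ha hb hp hn hs M B hregM hB0 hAB hB2 hBp1 j hm
    have hs1 : 1 - p / n - 1 / (n:ℝ)^2 ≤ 1 := by
      have h1 : 0 ≤ p / (n:ℝ) := by positivity
      have h2 : 0 ≤ 1 / (n:ℝ)^2 := by positivity
      linarith
    have hsnj : (1 - p / n - 1 / (n:ℝ)^2) ^ n ≤ (1 - p / n - 1 / (n:ℝ)^2) ^ j :=
      pow_le_pow_of_le_one hs hs1 (show j ≤ n by omega)
    have hA0 : (0:ℝ) < a / 2 * ((M:ℝ) + 2) := by positivity
    have hq0 : 0 ≤ a / 2 * ((M:ℝ) + 2) * (1 - p / n - 1 / (n:ℝ)^2) ^ j - B := by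
      have := mul_le_mul_of_nonneg_left hsnj hA0.le
      linarith
    have hw0 : (0:ℝ) < ((M + j : ℕ):ℝ) + 2 := by positivity
    nlinarith [h2, hq0, hw0]
end final

set_option maxHeartbeats 2000000 in
theorem stmt_6' (a b p : ℝ)
    (ha : 0 < a) (ha1 : a < 1) (hb : 1 < b) (hp : 0 < p) :
    ∃ N : ℕ, ∀ n : ℕ, N ≤ n →
      (∀ m : ℕ, m ≤ n → phiAux b p n m ≤ phibarAux a b p n m) ∧ (1 + b * p) / n ≤ b := by
  have hb0 : (0:ℝ) < b := by linarith
  have hL : (1:ℝ) < 1 + b * p := by nlinarith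
  have hD0 : (0:ℝ) < 2 * (1 + b * p) + a * (p + 1) := by nlinarith
  set L := 1 + b * p with hLdef
  set D := 2 * L + a * (p + 1) with hDdef
  set B := (2 * L + D) / p with hBdef
  have hB0 : 0 < B := by rw [hBdef]; positivity
  have hBp : B * p = 2 * L + D := by rw [hBdef]; field_simp
  set E0 := Real.exp (-(2 * (p + 1))) with hE0def
  have hE0 : 0 < E0 := Real.exp_pos _
  obtain ⟨N, hN⟩ := exists_nat_gt (max (max 2 (4 * p))
    (max (2 * L / a) (max (4 * D / a) ((D / a) * (1 + 2 * B / (a * E0))))))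
  refine ⟨N, fun n hn => ?_⟩
  have hNn : (N:ℝ) ≤ n := Nat.cast_le.mpr hn
  have hmax := hN.trans_le hNn
  have hn2 : (2:ℝ) < n := lt_of_le_of_lt ((le_max_left _ _).trans (le_max_left _ _)) hmax
  have hn4p : 4 * p < n := lt_of_le_of_lt ((le_max_right _ _).trans (le_max_left _ _)) hmax
  have h2La : 2 * L / a < n := lt_of_le_of_lt ((le_max_left _ _).trans (le_max_right _ _)) hmax
  have h4Da : 4 * D / a < n :=
    lt_of_le_of_lt (((le_max_left _ _).trans (le_max_right _ _)).trans (le_max_right _ _)) hmax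
  have hbig : (D / a) * (1 + 2 * B / (a * E0)) < n :=
    lt_of_le_of_lt (((le_max_right _ _).trans (le_max_right _ _)).trans (le_max_right _ _)) hmax
  have hn0 : (0:ℝ) < n := by linarith
  have hn1 : (1:ℝ) ≤ n := by linarith
  -- coefficient nonnegativity
  have hpn : p / (n:ℝ) ≤ 1/4 := by rw [div_le_iff₀ hn0]; linarith
  have hn2sq : (4:ℝ) ≤ (n:ℝ)^2 := by nlinarith
  have hinv : 1 / (n:ℝ)^2 ≤ 1/4 := by
    rw [div_le_div_iff₀ (by positivity) (by norm_num)]; linarith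
  have hs : 0 ≤ 1 - p / n - 1 / (n:ℝ)^2 := by linarith
  have hc2 : p / n + 1 / (n:ℝ)^2 ≤ 1/2 := by linarith
  -- base condition
  have hbase : (1 + b * p) / n ≤ a / 2 := by
    rw [div_le_div_iff₀ hn0 (by norm_num)]
    have : 2 * L < a * n := by
      have := (div_lt_iff₀ ha).mp h2La
      linarith [mul_comm a (n:ℝ)]
    rw [hLdef] at this
    linarith
  -- the cutoff M
  have handD : 4 < a * n / D := by
    rw [lt_div_iff₀ hD0]
    have := (div_lt_iff₀ ha).mp h4Da
    nlinarith
  have hfl1 : ((Nat.floor (a * n / D) : ℕ):ℝ) ≤ a * n / D := Nat.floor_le (by positivity)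
  have hfl2 : a * n / D < (Nat.floor (a * n / D) : ℕ) + 1 := Nat.lt_floor_add_one _
  set Mw := Nat.floor (a * n / D) with hMwdef
  have hMw3 : (3:ℝ) ≤ (Mw:ℝ) := by linarith
  have hMwge2 : 2 ≤ Mw := by exact_mod_cast (by linarith : (2:ℝ) ≤ (Mw:ℝ))
  set M := Mw - 2 with hMdef
  have hMcast : ((M:ℕ):ℝ) + 2 = (Mw:ℝ) := by
    rw [hMdef, Nat.cast_sub hMwge2]
    ring
  have hanD : (Mw:ℝ) * D ≤ a * n := (le_div_iff₀ hD0).mp hfl1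
  have han4D : 4 * D ≤ a * n := by
    have := (lt_div_iff₀ hD0).mp handD
    linarith
  -- hM
  have hM : ((M:ℝ) + 2) * (2 * (1 + b * p) + a * (p + 1)) ≤ a * n := by
    rw [hMcast]
    exact hanD
  -- hBp1
  have hBp1 : a / 2 * (n:ℝ) ≤ (B * p - 2 * (1 + b * p)) * ((M:ℝ) + 2) := by
    rw [hMcast]
    have h1 : B * p - 2 * (1 + b * p) = D := by rw [hBp, hLdef]; ring
    rw [h1]
    -- D * Mw ≥ D * (a n / D - 1) = a n - D ≥ a n / 2
    have h2 : a * n / D - 1 ≤ (Mw:ℝ) := by linarith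
    have h3 : D * (a * n / D) = a * n := by field_simp
    have h4 := mul_le_mul_of_nonneg_left h2 hD0.le
    rw [mul_sub, h3, mul_one] at h4
    nlinarith
  -- hAB
  have hsnE0 : E0 ≤ (1 - p / n - 1 / (n:ℝ)^2) ^ n := by
    have hcnn : (p / n + 1 / (n:ℝ)^2) * n = p + 1 / n := by
      field_simp
    have h1 : Real.exp (-(2 * (p + 1))) ≤ Real.exp ((n:ℝ) * (-(2 * (p / n + 1 / (n:ℝ)^2)))) := by
      apply Real.exp_le_exp.mpr
      have hinvn : 1 / (n:ℝ) ≤ 1 := by rw [div_le_one hn0]; linarith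
      nlinarith [hcnn]
    have h2 := pow_exp_bound (p / n + 1 / (n:ℝ)^2) n (by positivity) hc2
    have h3 : 1 - (p / n + 1 / (n:ℝ)^2) = 1 - p / n - 1 / (n:ℝ)^2 := by ring
    rw [h3] at h2
    exact (h1.trans h2)
  have hAB : B ≤ a / 2 * ((M:ℝ) + 2) * (1 - p / n - 1 / (n:ℝ)^2) ^ n := by
    rw [hMcast]
    have h3 : 1 + 2 * B / (a * E0) < a * n / D := by
      rw [lt_div_iff₀ hD0]
      have e : D / a * (1 + 2 * B / (a * E0)) = (D * (1 + 2 * B / (a * E0))) / a := by ring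
      rw [e] at hbig
      have h2' := (div_lt_iff₀ ha).mp hbig
      nlinarith
    have h4 : 2 * B / (a * E0) ≤ (Mw:ℝ) := by linarith
    have h5 : 2 * B ≤ (Mw:ℝ) * (a * E0) := by
      rw [div_le_iff₀ (by positivity)] at h4
      linarith
    have h6 : B ≤ a / 2 * (Mw:ℝ) * E0 := by nlinarith
    have h7 : a / 2 * (Mw:ℝ) * E0 ≤ a / 2 * (Mw:ℝ) * (1 - p / n - 1 / (n:ℝ)^2) ^ n :=
      mul_le_mul_of_nonneg_left hsnE0 (by positivity)
    linarith
  have hB2 : 2 * (1 + b * p) ≤ B * p := by rw [hBp, hLdef]; nlinarith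
  refine ⟨gap_nonneg ha hb0 hp hn1 hs hbase M B hM hB0 hAB hB2 hBp1, ?_⟩
  have : a / 2 ≤ b := by linarith
  linarith

/-- eventually `k_n ≤ k̄_n`: the gambler accepts the value `b` not having seen
the value `a` later than it accepts the value `b` after having seen the value `a`. -/
theorem stmt_6 (a b p : ℝ)
    (ha : 0 < a) (ha1 : a < 1) (hb : 1 < b) (hp : 0 < p)
    (hlog : Real.log (1 + p * b) < p)
    (hI : (1 + b * p) / (1 + (b - a) * p) * Real.log ((1 + b * p) / (1 + (b - a) * p)) ≤ a * p)
    (hII : (2 - p) * (b - a) < 1)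
    (hIII : (1 - (2 - p) * (b - a)) / (1 + p * (b - a))
        < 1 + (1 / p) * Real.log ((1 + p * (b - a)) / (1 + p * b)))
    (hIV : 0 ≤ 2 + p * b * (1 - p * (b - a)))
    (hV : b * p * (1 + (b - a) * p) / ((1 + p * b) * Real.log (1 + p * b)) < 1)
    :
    ∃ N : ℕ, ∀ n : ℕ, N ≤ n → kn b p n ≤ kbarn a b p n := by
  obtain ⟨N, hN⟩ := stmt_6' a b p ha ha1 hb hp
  refine ⟨max N 1, fun n hn => ?_⟩
  have hnN : N ≤ n := le_trans (le_max_left _ _) hn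
  have hn1 : 1 ≤ n := le_trans (le_max_right _ _) hn
  obtain ⟨hgap, _⟩ := hN n hnN
  have hSne : {k : ℕ | 1 ≤ k ∧ k ≤ n ∧ phibar a b p n k ≤ b}.Nonempty := by
    refine ⟨n, hn1, le_rfl, ?_⟩
    show phibarAux a b p n (n - n) ≤ b
    rw [Nat.sub_self]
    show a ≤ b
    linarith
  have hmem : kbarn a b p n ∈ {k : ℕ | 1 ≤ k ∧ k ≤ n ∧ phibar a b p n k ≤ b} := by
    rw [kbarn]
    exact Nat.sInf_mem hSne
  obtain ⟨h1k, hkn, hphibar⟩ := hmem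
  have hT : kbarn a b p n ∈ {k : ℕ | 1 ≤ k ∧ k ≤ n ∧ phi b p n k ≤ b} := by
    refine ⟨h1k, hkn, ?_⟩
    have hg := hgap (n - kbarn a b p n) (Nat.sub_le _ _)
    show phiAux b p n (n - kbarn a b p n) ≤ b
    exact le_trans hg hphibar
  rw [kn]
  exact Nat.sInf_le hT
end

section
/- For every integer n with p/n + 1/n² ≤ 1 and every k ∈ {1,…,n}, one has the lower bound φ̄^{(n)}_k ≥ a + ((1+(b−a)·p)/n − a/n²)·Σ_{j=0}^{n-k-1} ((n−k−j)/(n+1−k))·(1 − p/n − 1/n²)^j (with the empty sum convention for k = n). -/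
private lemma keyS (q : ℝ) (m : ℕ) :
    (∑ j ∈ Finset.range (m + 1), (((m : ℝ) + 1 - j) / ((m : ℝ) + 2)) * q ^ j)
      = ((m : ℝ) + 1) / ((m : ℝ) + 2)
          * (1 + q * ∑ j ∈ Finset.range m, (((m : ℝ) - j) / ((m : ℝ) + 1)) * q ^ j) := by
  have hm1 : ((m : ℝ) + 1) ≠ 0 := by positivity
  have hm2 : ((m : ℝ) + 2) ≠ 0 := by positivity
  rw [Finset.sum_range_succ']
  have hterm : ∀ j ∈ Finset.range m,
      (((m : ℝ) + 1 - (j + 1 : ℕ)) / ((m : ℝ) + 2)) * q ^ (j + 1)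
        = ((m : ℝ) + 1) / ((m : ℝ) + 2) * (q * ((((m : ℝ) - j) / ((m : ℝ) + 1)) * q ^ j)) := by
    intro j hj
    push_cast
    field_simp
    ring
  rw [Finset.sum_congr rfl hterm, ← Finset.mul_sum, ← Finset.mul_sum]
  push_cast
  ring

private lemma key_bound (a b p : ℝ) (ha : 0 < a) (ha1 : a < 1) (hb : 1 < b) (hp : 0 < p)
    (n : ℕ) (hn1 : 1 ≤ n) (hn : p / n + 1 / (n : ℝ) ^ 2 ≤ 1) (m : ℕ) :
    a + ((1 + (b - a) * p) / n - a / (n : ℝ) ^ 2)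
        * ∑ j ∈ Finset.range m, (((m : ℝ) - j) / ((m : ℝ) + 1)) * (1 - p / n - 1 / (n : ℝ) ^ 2) ^ j
      ≤ phibarAux a b p n m := by
  have hn0 : (0 : ℝ) < n := by exact_mod_cast hn1
  have hn0' : (n : ℝ) ≠ 0 := ne_of_gt hn0
  have hn1' : (1 : ℝ) ≤ n := by exact_mod_cast hn1
  set q : ℝ := 1 - p / n - 1 / (n : ℝ) ^ 2 with hq_def
  have hq : 0 ≤ q := by simp only [hq_def]; linarith
  set C : ℝ := (1 + (b - a) * p) / n - a / (n : ℝ) ^ 2 with hC_def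
  clear_value q C
  have hC : 0 ≤ C := by
    have h1 : a / (n : ℝ) ^ 2 ≤ 1 / n := by
      rw [div_le_div_iff₀ (by positivity) hn0]
      nlinarith
    have h2 : 1 / (n : ℝ) ≤ (1 + (b - a) * p) / n := by
      apply div_le_div_of_nonneg_right _ hn0.le
      nlinarith
    linarith
  have hSnonneg : ∀ m : ℕ, 0 ≤ ∑ j ∈ Finset.range m,
      (((m : ℝ) - j) / ((m : ℝ) + 1)) * q ^ j := by
    intro m
    apply Finset.sum_nonneg
    intro j hj
    have hjm : (j : ℝ) ≤ m := by
      exact_mod_cast (Finset.mem_range.mp hj).le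
    have : 0 ≤ ((m : ℝ) - j) / ((m : ℝ) + 1) := by
      apply div_nonneg (by linarith) (by positivity)
    exact mul_nonneg this (pow_nonneg hq _)
  induction m with
  | zero => simp [phibarAux]
  | succ m ih =>
    set Sm : ℝ := ∑ j ∈ Finset.range m, (((m : ℝ) - j) / ((m : ℝ) + 1)) * q ^ j with hSm_def
    have hSm : 0 ≤ Sm := hSnonneg m
    have hX : a + C * Sm ≤ phibarAux a b p n m := ih
    have hXpos : 0 ≤ phibarAux a b p n m := by nlinarith [mul_nonneg hC hSm]
    show a + C * ∑ j ∈ Finset.range (m + 1),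
        (((m + 1 : ℕ) : ℝ) - j) / (((m + 1 : ℕ) : ℝ) + 1) * q ^ j
      ≤ max a (phiAux b p n m) / ((m : ℝ) + 2)
        + (1 - 1 / ((m : ℝ) + 2)) *
            ((1 / (n : ℝ) ^ 2) * max (n : ℝ) (phibarAux a b p n m)
              + (p / n) * max b (phibarAux a b p n m)
              + (1 - p / n - 1 / (n : ℝ) ^ 2) * max 0 (phibarAux a b p n m))
    have hsum : ∑ j ∈ Finset.range (m + 1),
        (((m + 1 : ℕ) : ℝ) - j) / (((m + 1 : ℕ) : ℝ) + 1) * q ^ j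
        = ((m : ℝ) + 1) / ((m : ℝ) + 2) * (1 + q * Sm) := by
      push_cast
      rw [← keyS q m]
      apply Finset.sum_congr rfl
      intro j hj
      ring_nf
    rw [hsum]
    have hm2pos : (0 : ℝ) < (m : ℝ) + 2 := by positivity
    have hcoef : 0 ≤ 1 - 1 / ((m : ℝ) + 2) := by
      have : 1 / ((m : ℝ) + 2) ≤ 1 := by
        rw [div_le_one hm2pos]; linarith
      linarith
    have hE : (1 / (n : ℝ) ^ 2) * n + (p / n) * b + q * (a + C * Sm)
        ≤ (1 / (n : ℝ) ^ 2) * max (n : ℝ) (phibarAux a b p n m)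
          + (p / n) * max b (phibarAux a b p n m)
          + q * max 0 (phibarAux a b p n m) := by
      have e1 := mul_le_mul_of_nonneg_left (le_max_left (n : ℝ) (phibarAux a b p n m))
        (by positivity : (0 : ℝ) ≤ 1 / (n : ℝ) ^ 2)
      have e2 := mul_le_mul_of_nonneg_left (le_max_left b (phibarAux a b p n m))
        (by positivity : (0 : ℝ) ≤ p / n)
      have e3 : a + C * Sm ≤ max 0 (phibarAux a b p n m) :=
        le_trans hX (le_max_right _ _)
      have e3' := mul_le_mul_of_nonneg_left e3 hq
      linarith
    have hmaxa : a ≤ max a (phiAux b p n m) := le_max_left _ _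
    have hmaxa' : a / ((m : ℝ) + 2) ≤ max a (phiAux b p n m) / ((m : ℝ) + 2) := by
      gcongr
    have hE' := mul_le_mul_of_nonneg_left hE hcoef
    have heq : a + C * (((m : ℝ) + 1) / ((m : ℝ) + 2) * (1 + q * Sm))
        = a / ((m : ℝ) + 2)
          + (1 - 1 / ((m : ℝ) + 2)) * ((1 / (n : ℝ) ^ 2) * n + (p / n) * b + q * (a + C * Sm)) := by
      simp only [hC_def, hq_def]
      field_simp
      ring
    rw [heq, ← hq_def]
    linarith [hE', hmaxa']

/-- iterative lower bound on `φ̄^{(n)}_k` for every `k ∈ {1,…,n}`. -/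
theorem stmt_10 (a b p : ℝ) (ha : 0 < a) (ha1 : a < 1) (hb : 1 < b) (hp : 0 < p)
    (n : ℕ) (hn : p / n + 1 / (n : ℝ) ^ 2 ≤ 1)
    (k : ℕ) (hk1 : 1 ≤ k) (hkn : k ≤ n) :
    a + ((1 + (b - a) * p) / n - a / (n : ℝ) ^ 2)
          * ∑ j ∈ Finset.range (n - k),
              (((n : ℝ) - (k : ℝ) - (j : ℝ)) / ((n : ℝ) + 1 - (k : ℝ)))
                * (1 - p / n - 1 / (n : ℝ) ^ 2) ^ j
      ≤ phibar a b p n k := by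
  have hn1 : 1 ≤ n := le_trans hk1 hkn
  have hcast : ((n - k : ℕ) : ℝ) = (n : ℝ) - k := Nat.cast_sub hkn
  have key := key_bound a b p ha ha1 hb hp n hn1 hn (n - k)
  unfold phibar
  refine le_trans (le_of_eq ?_) key
  congr 1
  congr 1
  apply Finset.sum_congr rfl
  intro j hj
  rw [hcast]
  ring_nf
end

section
/- Let p > 0, let c ∈ (0,1), and let (k_n) be a sequence of integers with 1 ≤ k_n ≤ n and k_n/n → c as n → ∞. Then there exist a constant C and an integer N such that for all n ≥ N, |Σ_{j=0}^{n-k_n-1} ((n−k_n−j)/(n+1−k_n))·(1 − p/n − 1/n²)^j − (n/p)·(1 − (1 − e^{−p·(1−k_n/n)})/(p·(1−k_n/n)))| ≤ C. -/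
/-!
Write `m = n - k_n` and `u = p/n`. Both terms have the shape `1/x - (1 - Q)/(M x²)`: summing the
arithmetic-geometric series gives it with `x = u + 1/n²`, `M = m + 1`, `Q = (1 - x)^(m+1)`, and
the main term is it with `x = u`, `M = m`, `Q = e^{-mu}`. The parameters differ by `1/n²`, `1` and
`O(1/n)` (the last from `e^{-Nx/(1-x)} ≤ (1 - x)^N ≤ e^{-Nx}` and the Lipschitz bound for `exp` on
`(-∞, 0]`). Since `k_n/n → c < 1`, eventually `m ≥ εn`, so `1/x`, `M` and `1/(Mx²)` are of order
`n`, and each of the three perturbations moves the shape by `O(1)`.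
-/

open Filter Real

theorem sq_mul_sum_range_sub_mul_one_sub_pow {R : Type*} [CommRing R] (x : R) (m : ℕ) :
    x ^ 2 * ∑ j ∈ Finset.range m, ((m : R) - j) * (1 - x) ^ j
      = (m + 1) * x - 1 + (1 - x) ^ (m + 1) := by
  induction m with
  | zero => simp
  | succ m ih =>
    have shift : ∑ j ∈ Finset.range m, (((m + 1 : ℕ) : R) - (j + 1 : ℕ)) * (1 - x) ^ (j + 1)
        = (1 - x) * ∑ j ∈ Finset.range m, ((m : R) - j) * (1 - x) ^ j := by
      rw [Finset.mul_sum]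
      exact Finset.sum_congr rfl fun j _ => by push_cast; ring
    rw [Finset.sum_range_succ', shift]
    push_cast
    linear_combination (1 - x) * ih

theorem sum_range_sub_div_mul_one_sub_pow {x : ℝ} (hx : x ≠ 0) (m : ℕ) :
    ∑ j ∈ Finset.range m, ((m : ℝ) - j) / (m + 1) * (1 - x) ^ j
      = 1 / x - (1 - (1 - x) ^ (m + 1)) / ((m + 1) * x ^ 2) := by
  have h := sq_mul_sum_range_sub_mul_one_sub_pow x m
  simp only [div_mul_eq_mul_div, ← Finset.sum_div]
  field_simp
  linear_combination h

namespace Real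

theorem exp_sub_exp_le_of_nonpos {s t : ℝ} (hts : t ≤ s) (hs : s ≤ 0) :
    exp s - exp t ≤ s - t := by
  have h : exp s * (1 + (t - s)) ≤ exp t := by
    calc exp s * (1 + (t - s)) ≤ exp s * exp (t - s) := by
          gcongr; linarith [add_one_le_exp (t - s)]
      _ = exp t := by rw [← exp_add]; ring_nf
  calc exp s - exp t ≤ exp s * (s - t) := by linarith
    _ ≤ s - t := mul_le_of_le_one_left (by linarith) (exp_le_one_iff.2 hs)

theorem exp_neg_div_one_sub_le_one_sub {x : ℝ} (hx : x < 1) :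
    exp (-(x / (1 - x))) ≤ 1 - x := by
  have hx1 : 0 < 1 - x := by linarith
  rw [exp_neg]
  refine inv_le_of_inv_le₀ hx1 ?_
  calc (1 - x)⁻¹ = x / (1 - x) + 1 := by field_simp; ring
    _ ≤ exp (x / (1 - x)) := add_one_le_exp _

theorem abs_one_sub_pow_sub_exp_le {x : ℝ} (hx0 : 0 ≤ x) (hx : x ≤ 1 / 2) (N : ℕ) :
    |(1 - x) ^ N - exp (-(N * x))| ≤ 2 * N * x ^ 2 := by
  have hx1 : 0 < 1 - x := by linarith
  have upper : (1 - x) ^ N ≤ exp (-(N * x)) := by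
    calc (1 - x) ^ N ≤ exp (-x) ^ N := pow_le_pow_left₀ hx1.le (one_sub_le_exp_neg x) N
      _ = exp (-(N * x)) := by rw [← exp_nat_mul]; ring_nf
  have lower : exp (-(N * (x / (1 - x)))) ≤ (1 - x) ^ N := by
    calc exp (-(N * (x / (1 - x)))) = exp (-(x / (1 - x))) ^ N := by
          rw [← exp_nat_mul]; ring_nf
      _ ≤ (1 - x) ^ N :=
          pow_le_pow_left₀ (exp_pos _).le (exp_neg_div_one_sub_le_one_sub (by linarith)) N
  have hxx : x ≤ x / (1 - x) := le_div_self hx0 hx1 (by linarith)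
  rw [abs_sub_comm, abs_of_nonneg (by linarith)]
  calc exp (-(N * x)) - (1 - x) ^ N ≤ exp (-(N * x)) - exp (-(N * (x / (1 - x)))) := by linarith
    _ ≤ N * (x / (1 - x)) - N * x :=
        (exp_sub_exp_le_of_nonpos (by gcongr) (neg_nonpos.2 (by positivity))).trans_eq (by ring)
    _ = N * x ^ 2 / (1 - x) := by field_simp; ring
    _ ≤ 2 * N * x ^ 2 := by
        rw [div_le_iff₀ hx1]
        nlinarith [mul_nonneg (mul_nonneg N.cast_nonneg (sq_nonneg x)) (by linarith : 0 ≤ 1 - 2 * x)]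

end Real

theorem div_add_one_div_sq_le {p n : ℝ} (hn : 1 ≤ n) : p / n + 1 / n ^ 2 ≤ (p + 1) / n := by
  have : 1 / n ^ 2 ≤ 1 / n := by gcongr; nlinarith
  rw [add_div]; linarith

theorem abs_one_sub_pow_succ_sub_exp_le {p : ℝ} (hp : 0 < p) {n m : ℕ}
    (hn : 2 * (p + 1) ≤ n) (hmn : m ≤ n) :
    |(1 - (p / n + 1 / n ^ 2)) ^ (m + 1) - exp (-p * (m / n))|
      ≤ (p + 2 + 4 * (p + 1) ^ 2) / n := by
  have hn0 : (0 : ℝ) < n := by linarith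
  have hm : (m : ℝ) + 1 ≤ 2 * n := by
    have : (m : ℝ) ≤ n := by exact_mod_cast hmn
    linarith
  set x := p / n + 1 / (n : ℝ) ^ 2
  have hx0 : 0 ≤ x := by positivity
  have hx_le : x ≤ (p + 1) / n := div_add_one_div_sq_le (by linarith)
  have hx_half : x ≤ 1 / 2 := hx_le.trans (by rw [div_le_iff₀ hn0]; linarith)
  have hgap : ((m + 1 : ℕ) : ℝ) * x - p * (m / n) = p / n + (m + 1) / n ^ 2 := by
    push_cast; simp only [x]; field_simp; ring
  have hexp : -(((m + 1 : ℕ) : ℝ) * x) ≤ -p * (m / n) := by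
    have : 0 ≤ p / n + (m + 1) / n ^ 2 := by positivity
    linarith
  have pow_exp := abs_one_sub_pow_sub_exp_le hx0 hx_half (m + 1)
  have exp_exp : |exp (-(((m + 1 : ℕ) : ℝ) * x)) - exp (-p * (m / n))|
      ≤ p / n + (m + 1) / n ^ 2 := by
    rw [abs_sub_comm, abs_of_nonneg (sub_nonneg.2 (exp_le_exp.2 hexp))]
    refine (exp_sub_exp_le_of_nonpos hexp ?_).trans_eq (by rw [← hgap]; ring)
    rw [neg_mul, neg_nonpos]; positivity
  calc _ ≤ |(1 - x) ^ (m + 1) - exp (-(((m + 1 : ℕ) : ℝ) * x))|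
        + |exp (-(((m + 1 : ℕ) : ℝ) * x)) - exp (-p * (m / n))| := abs_sub_le _ _ _
    _ ≤ 2 * ((m + 1 : ℕ) : ℝ) * x ^ 2 + (p / n + (m + 1) / n ^ 2) := add_le_add pow_exp exp_exp
    _ ≤ 2 * (2 * n) * ((p + 1) / n) ^ 2 + (p / n + 2 * n / n ^ 2) := by push_cast; gcongr
    _ = (p + 2 + 4 * (p + 1) ^ 2) / n := by field_simp; ring

theorem abs_inv_sub_inv_le {x u : ℝ} (hu : 0 < u) (hux : u ≤ x) :
    |1 / x - 1 / u| ≤ (x - u) / u ^ 2 := by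
  have hx : 0 < x := hu.trans_le hux
  calc |1 / x - 1 / u| = (x - u) / (u * x) := by
        rw [abs_sub_comm, abs_of_nonneg (sub_nonneg.2 (one_div_le_one_div_of_le hu hux))]
        field_simp
    _ ≤ (x - u) / u ^ 2 :=
        div_le_div_of_nonneg_left (sub_nonneg.2 hux) (by positivity) (by nlinarith)

theorem one_div_sq_sub_one_div_sq_le {x u : ℝ} (hu : 0 < u) (hux : u ≤ x) :
    1 / u ^ 2 - 1 / x ^ 2 ≤ 2 * (x - u) / u ^ 3 := by
  have hx : 0 < x := hu.trans_le hux
  rw [div_sub_div _ _ (by positivity) (by positivity),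
    div_le_div_iff₀ (by positivity) (by positivity)]
  nlinarith [mul_nonneg (mul_nonneg (sub_nonneg.2 hux) (sq_nonneg u)) (sub_nonneg.2 hux),
    mul_pos hu hx]

theorem abs_inv_sub_div_sq_sub_le {x u m Q R : ℝ} (hu : 0 < u) (hux : u ≤ x) (hm : 0 < m)
    (hQ0 : 0 ≤ Q) (hQ1 : Q ≤ 1) :
    |(1 / x - (1 - Q) / ((m + 1) * x ^ 2)) - (1 / u - (1 - R) / (m * u ^ 2))|
      ≤ (x - u) / u ^ 2 + (1 / (m * (m + 1) * u ^ 2) + 2 * (x - u) / ((m + 1) * u ^ 3))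
        + |Q - R| / (m * u ^ 2) := by
  have hx : 0 < x := hu.trans_le hux
  obtain ⟨D, hD_def⟩ : ∃ D, D = 1 / (m * u ^ 2) - 1 / ((m + 1) * x ^ 2) := ⟨_, rfl⟩
  have hD0 : 0 ≤ D := hD_def ▸ sub_nonneg.2 (one_div_le_one_div_of_le (by positivity) (by
    gcongr; linarith))
  have hD : D ≤ 1 / (m * (m + 1) * u ^ 2) + 2 * (x - u) / ((m + 1) * u ^ 3) := by
    calc D = 1 / (m * (m + 1) * u ^ 2) + (1 / u ^ 2 - 1 / x ^ 2) / (m + 1) := by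
          rw [hD_def]; field_simp; ring
      _ ≤ 1 / (m * (m + 1) * u ^ 2) + 2 * (x - u) / u ^ 3 / (m + 1) := by
          gcongr; exact one_div_sq_sub_one_div_sq_le hu hux
      _ = _ := by rw [div_div, mul_comm (u ^ 3)]
  calc _ = |(1 / x - 1 / u) + (1 - Q) * D + (Q - R) / (m * u ^ 2)| := by rw [hD_def]; congr 1; ring
    _ ≤ |1 / x - 1 / u| + |(1 - Q) * D| + |(Q - R) / (m * u ^ 2)| := abs_add_three _ _ _
    _ ≤ _ := by
        rw [abs_mul, abs_of_nonneg (sub_nonneg.2 hQ1), abs_of_nonneg hD0, abs_div,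
          abs_of_pos (by positivity : 0 < m * u ^ 2)]
        gcongr
        · exact abs_inv_sub_inv_le hu hux
        · exact (mul_le_of_le_one_left hD0 (by linarith)).trans hD

theorem abs_sum_range_sub_le {p ε : ℝ} (hp : 0 < p) (hε : 0 < ε) {n m : ℕ}
    (hn : 2 * (p + 1) ≤ n) (hεm : ε * n ≤ m) (hmn : m ≤ n) :
    |∑ j ∈ Finset.range m, ((m : ℝ) - j) / (m + 1) * (1 - p / n - 1 / (n : ℝ) ^ 2) ^ j
      - n / p * (1 - (1 - exp (-p * (m / n))) / (p * (m / n)))|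
      ≤ 1 / p ^ 2 + (1 / (ε * p) ^ 2 + 2 / (ε * p ^ 3))
        + (p + 2 + 4 * (p + 1) ^ 2) / (ε * p ^ 2) := by
  have hn0 : (0 : ℝ) < n := by linarith
  have hεn : 0 < ε * n := by positivity
  have hm0 : (0 : ℝ) < m := hεn.trans_le hεm
  set x := p / n + 1 / (n : ℝ) ^ 2
  have hx0 : 0 < x := by positivity
  have hux : p / n ≤ x := le_add_of_nonneg_right (by positivity)
  have hx1 : x ≤ 1 :=
    (div_add_one_div_sq_le (by linarith)).trans ((div_le_one hn0).2 (by linarith))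
  have hQ0 : 0 ≤ (1 - x) ^ (m + 1) := pow_nonneg (sub_nonneg.2 hx1) _
  have hQ1 : (1 - x) ^ (m + 1) ≤ 1 := pow_le_one₀ (sub_nonneg.2 hx1) (by linarith)
  have hsum : ∑ j ∈ Finset.range m, ((m : ℝ) - j) / (m + 1) * (1 - p / n - 1 / (n : ℝ) ^ 2) ^ j
      = 1 / x - (1 - (1 - x) ^ (m + 1)) / ((m + 1) * x ^ 2) := by
    rw [← sum_range_sub_div_mul_one_sub_pow hx0.ne']
    simp only [x, sub_add_eq_sub_sub]
  have hterm : n / p * (1 - (1 - exp (-p * (m / n))) / (p * (m / n)))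
      = 1 / (p / n) - (1 - exp (-p * (m / n))) / (m * (p / n) ^ 2) := by
    field_simp
  rw [hsum, hterm]
  refine (abs_inv_sub_div_sq_sub_le (by positivity) hux hm0 hQ0 hQ1).trans ?_
  have hxu : x - p / n = 1 / (n : ℝ) ^ 2 := by simp only [x]; ring
  rw [hxu]
  gcongr ?_ + (?_ + ?_) + ?_
  · exact le_of_eq (by field_simp)
  · calc 1 / (m * (m + 1) * (p / n) ^ 2) ≤ 1 / (ε * n * (ε * n) * (p / n) ^ 2) := by
          gcongr; linarith
      _ = 1 / (ε * p) ^ 2 := by field_simp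
  · calc 2 * (1 / (n : ℝ) ^ 2) / ((m + 1) * (p / n) ^ 3)
          ≤ 2 * (1 / (n : ℝ) ^ 2) / (ε * n * (p / n) ^ 3) := by gcongr; linarith
      _ = 2 / (ε * p ^ 3) := by field_simp
  · calc |(1 - x) ^ (m + 1) - exp (-p * (m / n))| / (m * (p / n) ^ 2)
          ≤ (p + 2 + 4 * (p + 1) ^ 2) / n / (ε * n * (p / n) ^ 2) := by
          gcongr; exact abs_one_sub_pow_succ_sub_exp_le hp hn hmn
      _ = (p + 2 + 4 * (p + 1) ^ 2) / (ε * p ^ 2) := by field_simp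

theorem stmt_12_general (p : ℝ) (hp : 0 < p) (c : ℝ) (hc1 : c < 1) (k : ℕ → ℕ)
    (hlim : Tendsto (fun n : ℕ => (k n : ℝ) / n) atTop (nhds c)) :
    ∃ C : ℝ, ∃ N : ℕ, ∀ n : ℕ, N ≤ n →
      |(∑ j ∈ Finset.range (n - k n),
            (((n : ℝ) - (k n : ℝ) - (j : ℝ)) / ((n : ℝ) + 1 - (k n : ℝ)))
              * (1 - p / n - 1 / (n : ℝ) ^ 2) ^ j)
          - ((n : ℝ) / p)
              * (1 - (1 - Real.exp (-p * (1 - (k n : ℝ) / n))) / (p * (1 - (k n : ℝ) / n)))|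
        ≤ C := by
  obtain ⟨ε, hε, hcε⟩ : ∃ ε > 0, c < 1 - ε := ⟨(1 - c) / 2, by linarith, by linarith⟩
  obtain ⟨N, hN⟩ := eventually_atTop.1 (hlim.eventually (gt_mem_nhds hcε))
  refine ⟨1 / p ^ 2 + (1 / (ε * p) ^ 2 + 2 / (ε * p ^ 3))
    + (p + 2 + 4 * (p + 1) ^ 2) / (ε * p ^ 2), max N ⌈2 * (p + 1)⌉₊, fun n hn => ?_⟩
  have hnp : 2 * (p + 1) ≤ n := Nat.ceil_le.1 (le_of_max_le_right hn)
  have hn0 : (0 : ℝ) < n := by linarith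
  have hk : (k n : ℝ) ≤ (1 - ε) * n := ((div_lt_iff₀ hn0).1 (hN n (le_of_max_le_left hn))).le
  have hkn : k n ≤ n := by
    have : (k n : ℝ) ≤ n := by nlinarith
    exact_mod_cast this
  have hm : ((n - k n : ℕ) : ℝ) = n - k n := Nat.cast_sub hkn
  have hα : 1 - (k n : ℝ) / n = ((n - k n : ℕ) : ℝ) / n := by rw [hm]; field_simp
  rw [hα, Finset.sum_congr rfl fun j _ => by rw [add_sub_right_comm, ← hm]]
  exact abs_sum_range_sub_le hp hε hnp (by rw [hm]; linarith) (Nat.sub_le _ _)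

/-- asymptotic estimate, with uniformly bounded error, of the weighted geometric
sum `Σ_{j=0}^{n-k_n-1} ((n−k_n−j)/(n+1−k_n))·(1 − p/n − 1/n²)^j` for a sequence of integers
`k_n` with `1 ≤ k_n ≤ n` and `k_n/n → c ∈ (0,1)`. -/
theorem stmt_12 (p : ℝ) (hp : 0 < p) (c : ℝ) (hc0 : 0 < c) (hc1 : c < 1)
    (k : ℕ → ℕ) (hk : ∀ n : ℕ, 1 ≤ n → 1 ≤ k n ∧ k n ≤ n)
    (hlim : Tendsto (fun n : ℕ => (k n : ℝ) / n) atTop (nhds c)) :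
    ∃ C : ℝ, ∃ N : ℕ, ∀ n : ℕ, N ≤ n →
      |(∑ j ∈ Finset.range (n - k n),
            (((n : ℝ) - (k n : ℝ) - (j : ℝ)) / ((n : ℝ) + 1 - (k n : ℝ)))
              * (1 - p / n - 1 / (n : ℝ) ^ 2) ^ j)
          - ((n : ℝ) / p)
              * (1 - (1 - Real.exp (-p * (1 - (k n : ℝ) / n))) / (p * (1 - (k n : ℝ) / n)))|
        ≤ C :=
  stmt_12_general p hp c hc1 k hlim
end

section
/- Let p > 0 and a, b be real numbers, and set B := 1/p + b. There exists a constant C such that for every integer n ≥ 1 and all integers l, m with 1 ≤ l ≤ m ≤ n+1, writing ν := l/n and λ := m/n, one has |(1/(n+1))·Σ_{i=m}^{n+1} (ν + B·(1 − e^{p(ν − i/n)}) + a·e^{p(ν − i/n)}) − (−λ·ν + ν + B·(1−λ) − (1/p)·(B − a)·(e^{−p(λ−ν)} − e^{−p(1−ν)}))| ≤ C/n. -/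
/-!
With `B = 1/p + b` and `ν = l/n`, the summand is `(ν + B) - (B - a) e^{pν} e^{-p i/n}`, so the
expression splits into the errors of two Riemann sums over the nodes `i/n`, `m ≤ i ≤ n + 1`,
normalised by `1/(n+1)`: that of the constant `1` against `1 - λ`, computed exactly from the
number of nodes, and that of `e^{-px}` against `∫_λ^1 e^{-px} dx = (e^{-pλ} - e^{-p})/p`. The
latter is a geometric sum with ratio `r = e^{-p/n}`, and `0 ≤ 1/(1 - e^{-x}) - 1/x ≤ 1` shows
that its closed form `(r^m - r^{n+2})/(1 - r)` is `(n/p + O(1)) (r^m - r^{n+2})`.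
-/

open Real Finset

theorem abs_inv_one_sub_exp_neg_sub_inv_le {x : ℝ} (hx : 0 < x) :
    |(1 - exp (-x))⁻¹ - x⁻¹| ≤ 1 := by
  have hpos : 0 < 1 - exp (-x) := by simpa using exp_lt_one_iff.mpr (neg_lt_zero.mpr hx)
  rw [abs_le]
  constructor
  · have : x⁻¹ ≤ (1 - exp (-x))⁻¹ := inv_anti₀ hpos (by linarith [one_sub_le_exp_neg x])
    linarith
  · have h : (x + 1) * exp (-x) ≤ 1 := by
      simpa [← exp_add] using mul_le_mul_of_nonneg_right (add_one_le_exp x) (exp_pos (-x)).le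
    rw [sub_le_iff_le_add, inv_le_comm₀ hpos (by positivity),
      show 1 + x⁻¹ = (x + 1) / x by field_simp, inv_div, div_le_iff₀ (by positivity)]
    nlinarith

theorem sum_Icc_pow_eq {r : ℝ} (hr : r ≠ 1) {m k : ℕ} (hm : m ≤ k + 1) :
    ∑ i ∈ Icc m k, r ^ i = (r ^ m - r ^ (k + 1)) / (1 - r) := by
  rw [← Ico_add_one_right_eq_Icc, geom_sum_Ico' hr hm]

theorem abs_riemannSum_one_sub_le {n m : ℕ} (hn : 1 ≤ n) (hm : m ≤ n + 1) :
    |1 / ((n : ℝ) + 1) * (#(Icc m (n + 1)) : ℝ) - (1 - m / n)| ≤ 2 / n := by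
  have hn0 : (0 : ℝ) < n := by exact_mod_cast hn
  have hm' : (m : ℝ) ≤ n + 1 := by exact_mod_cast hm
  have hcard : (#(Icc m (n + 1)) : ℝ) = n + 2 - m := by
    rw [Nat.card_Icc, Nat.cast_sub (by omega)]; push_cast; ring
  have heq : 1 / ((n : ℝ) + 1) * (#(Icc m (n + 1)) : ℝ) - (1 - m / n)
      = (n + m) / (n * (n + 1)) := by
    rw [hcard]; field_simp; ring
  rw [heq, abs_of_nonneg (by positivity), div_le_div_iff₀ (by positivity) hn0]
  nlinarith

theorem abs_riemannSum_exp_neg_sub_le {p : ℝ} (hp : 0 < p) {n m : ℕ} (hn : 1 ≤ n)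
    (hm : m ≤ n + 1) :
    |1 / ((n : ℝ) + 1) * ∑ i ∈ Icc m (n + 1), exp (-p * (i / n))
        - (exp (-p * (m / n)) - exp (-p)) / p| ≤ (3 + 1 / p) / n := by
  have hn0 : (0 : ℝ) < n := by exact_mod_cast hn
  set r := exp (-(p / n)) with hr
  have hpow (k : ℕ) : exp (-p * (k / n)) = r ^ k := by
    rw [hr, ← exp_nat_mul]; ring_nf
  have hr0 : 0 < r := exp_pos _
  have hr1 : r < 1 := exp_lt_one_iff.mpr (by simp [hp, hn0])
  have hexp : exp (-p) = r ^ n := by rw [← hpow, div_self hn0.ne', mul_one]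
  have hθ := abs_inv_one_sub_exp_neg_sub_inv_le (div_pos hp hn0)
  rw [← hr, inv_div] at hθ
  have hsum : ∑ i ∈ Icc m (n + 1), exp (-p * (i / n))
      = (r ^ m - r ^ (n + 2)) * (1 - r)⁻¹ := by
    simp_rw [hpow, sum_Icc_pow_eq hr1.ne (by omega : m ≤ n + 1 + 1), div_eq_mul_inv]
  have hhead : |r ^ m - r ^ (n + 2)| ≤ 1 := by
    rw [abs_le]; constructor <;>
      nlinarith [pow_pos hr0 m, pow_le_one₀ hr0.le hr1.le (n := m), pow_pos hr0 (n + 2),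
        pow_le_one₀ hr0.le hr1.le (n := n + 2)]
  have htail : 0 ≤ r ^ n - r ^ (n + 2) ∧ r ^ n - r ^ (n + 2) ≤ 2 * p / n := by
    have h1r : 1 - r ≤ p / n := by linarith [one_sub_le_exp_neg (p / n)]
    have hfac : r ^ n - r ^ (n + 2) = r ^ n * ((1 - r) * (1 + r)) := by ring
    rw [hfac]
    refine ⟨mul_nonneg (by positivity) (mul_nonneg (by linarith) (by linarith)), ?_⟩
    calc r ^ n * ((1 - r) * (1 + r)) ≤ 1 * (p / n * 2) := by
          gcongr
          · exact pow_le_one₀ hr0.le hr1.le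
          · linarith
      _ = 2 * p / n := by ring
  have hdecomp : 1 / ((n : ℝ) + 1) * ∑ i ∈ Icc m (n + 1), exp (-p * (i / n))
        - (exp (-p * (m / n)) - exp (-p)) / p
      = (r ^ m - r ^ (n + 2)) * (((1 - r)⁻¹ - n / p - 1 / p) / (n + 1))
        + (r ^ n - r ^ (n + 2)) / p := by
    rw [hsum, hpow, hexp]; field_simp; ring
  have hscale : |((1 - r)⁻¹ - n / p - 1 / p) / (n + 1)| ≤ (1 + 1 / p) / n := by
    rw [abs_div, abs_of_pos (by positivity : (0 : ℝ) < n + 1)]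
    calc |(1 - r)⁻¹ - n / p - 1 / p| / (n + 1) ≤ (1 + 1 / p) / (n + 1) := by
          gcongr
          exact (abs_sub _ _).trans (by rw [abs_of_pos (one_div_pos.mpr hp)]; linarith)
      _ ≤ (1 + 1 / p) / n := by gcongr; linarith
  rw [hdecomp]
  calc |(r ^ m - r ^ (n + 2)) * (((1 - r)⁻¹ - n / p - 1 / p) / (n + 1))
        + (r ^ n - r ^ (n + 2)) / p|
      ≤ |r ^ m - r ^ (n + 2)| * |((1 - r)⁻¹ - n / p - 1 / p) / (n + 1)|
        + (r ^ n - r ^ (n + 2)) / p := by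
        grw [abs_add_le, abs_mul, abs_of_nonneg (div_nonneg htail.1 hp.le)]
    _ ≤ 1 * ((1 + 1 / p) / n) + 2 * p / n / p := by
        gcongr
        · exact htail.2
    _ = (3 + 1 / p) / n := by field_simp; ring

/-- uniform `O(1/n)` estimate of the Riemann-type sum
`(1/(n+1))·Σ_{i=m}^{n+1} (ν + B·(1 − e^{p(ν − i/n)}) + a·e^{p(ν − i/n)})`, where `B := 1/p + b`,
`ν = l/n`, `λ = m/n`, by `−λ·ν + ν + B·(1−λ) − (1/p)·(B − a)·(e^{−p(λ−ν)} − e^{−p(1−ν)})`. -/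
theorem stmt_14 (p a b : ℝ) (hp : 0 < p) :
    ∃ C : ℝ, ∀ n : ℕ, 1 ≤ n → ∀ l m : ℕ, 1 ≤ l → l ≤ m → m ≤ n + 1 →
      |(1 / ((n : ℝ) + 1))
            * ∑ i ∈ Finset.Icc m (n + 1),
                ((l : ℝ) / n + (1 / p + b) * (1 - Real.exp (p * ((l : ℝ) / n - (i : ℝ) / n)))
                  + a * Real.exp (p * ((l : ℝ) / n - (i : ℝ) / n)))
          - (-((m : ℝ) / n) * ((l : ℝ) / n) + (l : ℝ) / n
              + (1 / p + b) * (1 - (m : ℝ) / n)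
              - (1 / p) * ((1 / p + b) - a)
                  * (Real.exp (-p * ((m : ℝ) / n - (l : ℝ) / n))
                      - Real.exp (-p * (1 - (l : ℝ) / n))))|
        ≤ C / n := by
  set B := 1 / p + b
  refine ⟨(2 + |B|) * 2 + |B - a| * exp (p * 2) * (3 + 1 / p), fun n hn l m _ hlm hmn => ?_⟩
  set ν := (l : ℝ) / n
  have hn0 : (0 : ℝ) < n := by exact_mod_cast hn
  have hν : ν ≤ 2 := by
    rw [div_le_iff₀ hn0]
    have : (l : ℝ) ≤ n + 1 := by exact_mod_cast hlm.trans hmn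
    have : (1 : ℝ) ≤ n := by exact_mod_cast hn
    linarith
  have hsum :
      ∑ i ∈ Icc m (n + 1), (ν + B * (1 - exp (p * (ν - i / n))) + a * exp (p * (ν - i / n)))
        = (ν + B) * #(Icc m (n + 1))
          - (B - a) * exp (p * ν) * ∑ i ∈ Icc m (n + 1), exp (-p * (i / n)) := by
    rw [card_eq_sum_ones, Nat.cast_sum, mul_sum, mul_sum, ← sum_sub_distrib]
    refine sum_congr rfl fun i _ => ?_
    rw [show p * (ν - i / n) = p * ν + -p * (i / n) by ring, exp_add]
    push_cast; ring
  have hsplit (x : ℝ) : exp (-p * (x - ν)) = exp (p * ν) * exp (-p * x) := by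
    rw [← exp_add]; ring_nf
  rw [hsum, hsplit, hsplit, show -p * 1 = -p by ring]
  calc _ = |(ν + B) * (1 / ((n : ℝ) + 1) * (#(Icc m (n + 1)) : ℝ) - (1 - m / n))
        - (B - a) * exp (p * ν) * (1 / ((n : ℝ) + 1) * ∑ i ∈ Icc m (n + 1), exp (-p * (i / n))
            - (exp (-p * (m / n)) - exp (-p)) / p)| := by congr 1; ring
    _ ≤ |ν + B| * (2 / n) + |B - a| * exp (p * ν) * ((3 + 1 / p) / n) := by
        grw [abs_sub, abs_mul, abs_mul, abs_mul, abs_exp, abs_riemannSum_one_sub_le hn hmn,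
          abs_riemannSum_exp_neg_sub_le hp hn hmn]
    _ ≤ (2 + |B|) * (2 / n) + |B - a| * exp (p * 2) * ((3 + 1 / p) / n) := by
        gcongr
        · exact (abs_add_le _ _).trans (by rw [abs_of_nonneg (by positivity)]; linarith)
    _ = _ := by ring
end

section
/- Assume additionally Condition (IV): 2 + p·b·(1 − p·(b−a)) ≥ 0. Then for every ν ∈ [μ*, λ*] one has 2 + p·(2b − a + (1+b·p)·(ν − λ*)) > 0, and consequently the function g(ν) := 1 − ν + ((1+b·p)·(ν − λ*) − a)·e^{p(ν−1)} is strictly convex on the interval [μ*, λ*]. -/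
/-- `μ* = 1 + (1/p)·log(1/(1+b·p))`. -/
noncomputable def mustar (b p : ℝ) : ℝ := 1 + (1 / p) * Real.log (1 / (1 + b * p))

/-- `λ* = 1 + (1/p)·log((1+(b−a)·p)/(1+b·p))`. -/
noncomputable def lamstar (a b p : ℝ) : ℝ :=
  1 + (1 / p) * Real.log ((1 + (b - a) * p) / (1 + b * p))

/-!
Since `p·(λ* − μ*) = log(1 + (b−a)p) < (b−a)p`, every `ν ∈ [μ*, λ*]` has
`p·(λ* − ν) < (b−a)p`, and at `p·(λ* − ν) = (b−a)p` the quantity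
`2 + p·(2b − a + (1+bp)(ν − λ*))` equals the left side `2 + pb(1 − p(b−a))` of Condition (IV).
For the convexity, the derivative of `(cx + d)·e^{px+q}` is again of this form, so
`g''(ν) = p·e^{p(ν−1)}·(2 + p·(2b − a + (1+bp)(ν − λ*)))`, which is positive by the first part.
-/

open Real

section AffineMulExp

variable (c d p q : ℝ)

theorem hasDerivAt_affine_mul_exp (x : ℝ) :
    HasDerivAt (fun x => (c * x + d) * exp (p * x + q))
      ((p * c * x + (p * d + c)) * exp (p * x + q)) x := by
  have hlin : ∀ k l : ℝ, HasDerivAt (fun x => k * x + l) k x := fun k l => by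
    simpa using ((hasDerivAt_id x).const_mul k).add_const l
  exact ((hlin c d).mul (hlin p q).exp).congr_deriv (by ring)

theorem deriv_affine_mul_exp :
    deriv (fun x => (c * x + d) * exp (p * x + q)) =
      fun x => (p * c * x + (p * d + c)) * exp (p * x + q) :=
  funext fun x => (hasDerivAt_affine_mul_exp c d p q x).deriv

theorem iterate_two_deriv_affine_mul_exp (x : ℝ) :
    deriv^[2] (fun x => (c * x + d) * exp (p * x + q)) x =
      p * (p * (c * x + d) + 2 * c) * exp (p * x + q) := by
  simp only [Function.iterate_succ, Function.iterate_zero, Function.comp_apply, id_eq,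
    deriv_affine_mul_exp]
  ring

theorem strictConvexOn_affine_mul_exp {s : Set ℝ} (hs : Convex ℝ s)
    (h : ∀ x ∈ interior s, 0 < p * (p * (c * x + d) + 2 * c)) :
    StrictConvexOn ℝ s (fun x => (c * x + d) * exp (p * x + q)) := by
  refine strictConvexOn_of_deriv2_pos hs (by fun_prop) fun x hx => ?_
  rw [iterate_two_deriv_affine_mul_exp]
  exact mul_pos (h x hx) (exp_pos _)

end AffineMulExp

theorem mul_lamstar_sub_mustar {a b p : ℝ} (hp : p ≠ 0) (hbp : 1 + b * p ≠ 0)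
    (habp : 1 + (b - a) * p ≠ 0) :
    p * (lamstar a b p - mustar b p) = log (1 + (b - a) * p) := by
  rw [lamstar, mustar, log_div habp hbp, log_div one_ne_zero hbp, log_one]
  field_simp
  ring

theorem mul_lamstar_sub_mustar_lt {a b p : ℝ} (hp : 0 < p) (hab : a < b) (hbp : 0 < 1 + b * p) :
    p * (lamstar a b p - mustar b p) < (b - a) * p := by
  have habp : 0 < (b - a) * p := mul_pos (sub_pos.2 hab) hp
  rw [mul_lamstar_sub_mustar hp.ne' hbp.ne' (by linarith)]
  linarith [log_lt_sub_one_of_pos (by linarith : 0 < 1 + (b - a) * p) (by linarith)]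

theorem two_add_pos_of_mem_Icc_mustar_lamstar {a b p ν : ℝ} (hp : 0 < p) (hab : a < b)
    (hbp : 0 < 1 + b * p) (hIV : 0 ≤ 2 + p * b * (1 - p * (b - a)))
    (hν : ν ∈ Set.Icc (mustar b p) (lamstar a b p)) :
    0 < 2 + p * (2 * b - a + (1 + b * p) * (ν - lamstar a b p)) := by
  have hlt : p * (lamstar a b p - ν) < (b - a) * p := by
    nlinarith [mul_lamstar_sub_mustar_lt hp hab hbp, hν.1]
  nlinarith [mul_lt_mul_of_pos_left hlt hbp]

theorem stmt_16_general (a b p : ℝ) (ha1 : a < 1) (hb : 1 < b) (hp : 0 < p)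
    (hIV : 0 ≤ 2 + p * b * (1 - p * (b - a))) :
    (∀ ν ∈ Set.Icc (mustar b p) (lamstar a b p),
        0 < 2 + p * (2 * b - a + (1 + b * p) * (ν - lamstar a b p))) ∧
      StrictConvexOn ℝ (Set.Icc (mustar b p) (lamstar a b p))
        (fun ν => 1 - ν + ((1 + b * p) * (ν - lamstar a b p) - a) * Real.exp (p * (ν - 1))) := by
  have hab : a < b := ha1.trans hb
  have hbp : 0 < 1 + b * p := add_pos one_pos (mul_pos (one_pos.trans hb) hp)
  have hpos := fun ν => two_add_pos_of_mem_Icc_mustar_lamstar (ν := ν) hp hab hbp hIV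
  refine ⟨hpos, ?_⟩
  have hsplit : (fun ν => 1 - ν + ((1 + b * p) * (ν - lamstar a b p) - a) * exp (p * (ν - 1))) =
      (fun ν => ((1 + b * p) * ν + (-((1 + b * p) * lamstar a b p) - a)) * exp (p * ν + -p)) +
        (fun ν => 1 - ν) := by
    ext ν
    simp only [Pi.add_apply]
    ring_nf
  rw [hsplit]
  refine (strictConvexOn_affine_mul_exp _ _ _ _ (convex_Icc _ _) fun ν hν => ?_).add_convexOn
    ((convexOn_const 1 (convex_Icc _ _)).sub (concaveOn_id (convex_Icc _ _)))
  exact mul_pos hp ((hpos ν (interior_subset hν)).trans_eq (by ring))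

/-- under Condition (IV), for every `ν ∈ [μ*, λ*]` one has
`2 + p·(2b − a + (1+b·p)·(ν − λ*)) > 0`, and consequently
`g(ν) := 1 − ν + ((1+b·p)·(ν − λ*) − a)·e^{p(ν−1)}` is strictly convex on `[μ*, λ*]`. -/
theorem stmt_16 (a b p : ℝ) (ha : 0 < a) (ha1 : a < 1) (hb : 1 < b) (hp : 0 < p)
    (hIV : 0 ≤ 2 + p * b * (1 - p * (b - a))) :
    (∀ ν ∈ Set.Icc (mustar b p) (lamstar a b p),
        0 < 2 + p * (2 * b - a + (1 + b * p) * (ν - lamstar a b p))) ∧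
      StrictConvexOn ℝ (Set.Icc (mustar b p) (lamstar a b p))
        (fun ν => 1 - ν + ((1 + b * p) * (ν - lamstar a b p) - a) * Real.exp (p * (ν - 1))) :=
  stmt_16_general a b p ha1 hb hp hIV
end

section
/- The function g(ν) := 1 − ν + ((1+b·p)·(ν − λ*) − a)·e^{p(ν−1)} satisfies g(μ*) = (1/p)·log((1+b·p)/(1+(b−a)·p)) − a/(1+b·p) and g(λ*) = (1/p)·log((1+b·p)/(1+(b−a)·p)) − a·(1+(b−a)·p)/(1+b·p); in particular g(μ*) > g(λ*), and if moreover Condition (I) holds, namely ((1+b·p)/(1+(b−a)·p))·log((1+b·p)/(1+(b−a)·p)) ≤ a·p, then g(λ*) ≤ 0. -/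
/-- The function `g(ν) := 1 − ν + ((1+b·p)·(ν − λ*) − a)·e^{p(ν−1)}`. -/
noncomputable def gfun (a b p nu : ℝ) : ℝ :=
  1 - nu + ((1 + b * p) * (nu - lamstar a b p) - a) * Real.exp (p * (nu - 1))

/-! Write `c = 1 + b·p` and `d = 1 + (b−a)·p`. Both `μ*` and `λ*` have the form `1 + (1/p)·log x`
(with `x = 1/c` resp. `x = d/c`), so the exponential in `g` collapses to `x` and `g` becomes an
explicit combination of `log c`, `log d` and `a`. The two values differ by `a·(b−a)·p/c > 0`, and
Condition (I) is `g(λ*) ≤ 0` after clearing the denominators `p` and `c`. -/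

open Real

theorem exp_mul_one_add_one_div_mul_log_sub_one {p x : ℝ} (hp : p ≠ 0) (hx : 0 < x) :
    exp (p * (1 + 1 / p * log x - 1)) = x := by
  rw [add_sub_cancel_left, ← mul_assoc, mul_one_div_cancel hp, one_mul, exp_log hx]

section

variable {a b p : ℝ}

theorem mustar_sub_lamstar (hc : 0 < 1 + b * p) (hd : 0 < 1 + (b - a) * p) :
    mustar b p - lamstar a b p = -(1 / p) * log (1 + (b - a) * p) := by
  rw [mustar, lamstar, log_div hd.ne' hc.ne', one_div (1 + b * p), log_inv]
  ring

theorem gfun_mustar (hp : p ≠ 0) (hc : 0 < 1 + b * p) (hd : 0 < 1 + (b - a) * p) :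
    gfun a b p (mustar b p)
      = 1 / p * log ((1 + b * p) / (1 + (b - a) * p)) - a / (1 + b * p) := by
  have hexp : exp (p * (mustar b p - 1)) = 1 / (1 + b * p) :=
    exp_mul_one_add_one_div_mul_log_sub_one hp (by positivity)
  rw [gfun, hexp, mustar_sub_lamstar hc hd, mustar, one_div (1 + b * p), log_inv,
    log_div hc.ne' hd.ne', ← div_eq_mul_inv, sub_div, mul_div_cancel_left₀ _ hc.ne']
  ring

theorem gfun_lamstar (hp : p ≠ 0) (hc : 0 < 1 + b * p) (hd : 0 < 1 + (b - a) * p) :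
    gfun a b p (lamstar a b p)
      = 1 / p * log ((1 + b * p) / (1 + (b - a) * p))
          - a * (1 + (b - a) * p) / (1 + b * p) := by
  have hexp : exp (p * (lamstar a b p - 1)) = (1 + (b - a) * p) / (1 + b * p) :=
    exp_mul_one_add_one_div_mul_log_sub_one hp (by positivity)
  rw [gfun, hexp, sub_self, lamstar, ← inv_div (1 + b * p), log_inv]
  field_simp
  ring

theorem gfun_lamstar_lt_gfun_mustar (ha : 0 < a) (hab : a < b) (hp : 0 < p) :
    gfun a b p (lamstar a b p) < gfun a b p (mustar b p) := by
  have hc : 0 < 1 + b * p := by nlinarith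
  have hd : 0 < 1 + (b - a) * p := by nlinarith
  rw [gfun_lamstar hp.ne' hc hd, gfun_mustar hp.ne' hc hd, sub_lt_sub_iff_left,
    div_lt_div_iff_of_pos_right hc]
  nlinarith [mul_pos ha (mul_pos (sub_pos.2 hab) hp)]

theorem gfun_lamstar_nonpos (hp : 0 < p) (hc : 0 < 1 + b * p) (hd : 0 < 1 + (b - a) * p)
    (hI : (1 + b * p) / (1 + (b - a) * p) * log ((1 + b * p) / (1 + (b - a) * p)) ≤ a * p) :
    gfun a b p (lamstar a b p) ≤ 0 := by
  rw [gfun_lamstar hp.ne' hc hd, sub_nonpos, one_div_mul_eq_div, div_le_div_iff₀ hp hc]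
  rw [div_mul_eq_mul_div, div_le_iff₀ hd] at hI
  linarith

end

/-- values of `g` at `μ*` and `λ*`, the inequality `g(μ*) > g(λ*)`, and,
under Condition (I), `g(λ*) ≤ 0`. -/
theorem stmt_17 (a b p : ℝ) (ha : 0 < a) (ha1 : a < 1) (hb : 1 < b) (hp : 0 < p) :
    gfun a b p (mustar b p)
        = (1 / p) * Real.log ((1 + b * p) / (1 + (b - a) * p)) - a / (1 + b * p) ∧
      gfun a b p (lamstar a b p)
        = (1 / p) * Real.log ((1 + b * p) / (1 + (b - a) * p))
            - a * (1 + (b - a) * p) / (1 + b * p) ∧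
      gfun a b p (lamstar a b p) < gfun a b p (mustar b p) ∧
      ((1 + b * p) / (1 + (b - a) * p) * Real.log ((1 + b * p) / (1 + (b - a) * p)) ≤ a * p →
        gfun a b p (lamstar a b p) ≤ 0) := by
  have hab : a < b := ha1.trans hb
  have hc : 0 < 1 + b * p := by nlinarith
  have hd : 0 < 1 + (b - a) * p := by nlinarith
  exact ⟨gfun_mustar hp.ne' hc hd, gfun_lamstar hp.ne' hc hd,
    gfun_lamstar_lt_gfun_mustar ha hab hp, gfun_lamstar_nonpos hp hc hd⟩
end
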